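/- arXiv:0904.1686 — 6 statements merged into one kernel-verified Lean document; each statement's English description precedes it below -/
import Mathlib

section
/- Let A = {x ∈ ℝⁿ : ⟨x, η⟩ = κ} be a rational hyperplane with primitive integral normal η, and let u ∉ A and y ∈ A be rational points. Then the affine distance d_aff(u,y) (the ratio of the Euclidean distance |u−y| to the minimal Euclidean norm of a nonzero integral point on the line through 0 parallel to y−u) satisfies d_aff(u,y) ≤ |κ − ⟨u, η⟩|, with equality if and only if the primitive integral vector λ in the direction y−u satisfies |⟨λ, η⟩| = 1. -/
/-!
Write `y - u = c • l` with `l` primitive and `c > 0`. Every integral point on `ℝ l` is an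
integral multiple of `l` (a rational multiple `p/q` in lowest terms forces `q ∣ l`), so the
minimal norm is `|l|` and `d_aff(u, y) = c`. On the other hand
`κ - ⟨u, η⟩ = ⟨y - u, η⟩ = c ⟨l, η⟩`, and `⟨l, η⟩` is a nonzero integer since `u ∉ A`.
-/

open Finset

variable {ι : Type*}

theorem exists_int_eq_smul_of_real_smul {l a : ι → ℤ}
    (hlprim : ∀ d : ℤ, (∀ i, d ∣ l i) → IsUnit d) {i₀ : ι} (hi₀ : l i₀ ≠ 0) {t : ℝ}
    (hat : (fun i => (a i : ℝ)) = t • fun i => (l i : ℝ)) :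
    ∃ k : ℤ, a = k • l := by
  have hcoord (i : ι) : (a i : ℝ) = t * l i := congrFun hat i
  set r : ℚ := a i₀ / l i₀
  have htr : t = r := by
    have : (l i₀ : ℝ) ≠ 0 := Int.cast_ne_zero.mpr hi₀
    push_cast [r]
    rw [hcoord i₀, mul_div_cancel_right₀ _ this]
  have hden_mul (i : ι) : (r.den : ℤ) * a i = r.num * l i := by
    have h := hcoord i
    rw [htr, ← Rat.num_div_den r] at h
    push_cast at h
    field_simp at h
    have h' : ((r.den : ℤ) : ℝ) * a i = r.num * l i := by push_cast; linarith
    exact_mod_cast h'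
  have hcop : IsCoprime (r.den : ℤ) r.num := by
    rw [Int.isCoprime_iff_gcd_eq_one, Int.gcd_comm]
    exact r.reduced
  have hden_unit : IsUnit (r.den : ℤ) :=
    hlprim _ fun i => hcop.dvd_of_dvd_mul_left ⟨a i, (hden_mul i).symm⟩
  have hden_one : r.den = 1 := by
    simpa using Int.isUnit_iff.mp hden_unit
  refine ⟨r.num, funext fun i => ?_⟩
  simpa [hden_one] using hden_mul i

theorem sqrt_sum_mul_sq [Fintype ι] (c : ℝ) (x : ι → ℝ) :
    Real.sqrt (∑ i, (c * x i) ^ 2) = |c| * Real.sqrt (∑ i, x i ^ 2) := by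
  simp_rw [mul_pow, ← mul_sum]
  rw [Real.sqrt_mul (sq_nonneg c), Real.sqrt_sq_eq_abs]

theorem isLeast_sqrt_sum_sq_of_primitive [Fintype ι] {l : ι → ℤ}
    (hlprim : l ≠ 0 ∧ ∀ d : ℤ, (∀ i, d ∣ l i) → IsUnit d) {v : ι → ℝ} {c : ℝ} (hc : c ≠ 0)
    (hv : v = c • fun i => (l i : ℝ)) :
    IsLeast {r : ℝ | ∃ (a : ι → ℤ) (t : ℝ), a ≠ 0 ∧ ((fun i => (a i : ℝ)) = t • v) ∧
        r = Real.sqrt (∑ i, (a i : ℝ) ^ 2)} (Real.sqrt (∑ i, (l i : ℝ) ^ 2)) := by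
  obtain ⟨hl0, hlprim⟩ := hlprim
  refine ⟨⟨l, c⁻¹, hl0, by rw [hv, smul_smul, inv_mul_cancel₀ hc, one_smul], rfl⟩, ?_⟩
  rintro _ ⟨a, t, ha0, hat, rfl⟩
  obtain ⟨i₀, hi₀⟩ := Function.ne_iff.mp hl0
  obtain ⟨k, rfl⟩ := exists_int_eq_smul_of_real_smul hlprim hi₀ (t := t * c)
    (by rw [hat, hv, smul_smul])
  have hk : k ≠ 0 := by rintro rfl; exact ha0 (zero_smul ℤ l)
  have hk1 : (1 : ℝ) ≤ |(k : ℝ)| := by exact_mod_cast Int.one_le_abs hk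
  simp only [Pi.smul_apply, smul_eq_mul, Int.cast_mul, sqrt_sum_mul_sq]
  exact le_mul_of_one_le_left (Real.sqrt_nonneg _) hk1

theorem affine_distance_le_ell_general {n : ℕ} (η l : Fin n → ℤ) (κ : ℝ)
    (hlprim : l ≠ 0 ∧ ∀ d : ℤ, (∀ i, d ∣ l i) → IsUnit d)
    (u y : Fin n → ℝ)
    (hyA : ∑ i, (η i : ℝ) * y i = κ)
    (huA : ∑ i, (η i : ℝ) * u i ≠ κ)
    -- `l` is the primitive integral vector in the direction `y - u`
    (c : ℝ) (hc : 0 < c) (hdir : y - u = c • (fun i => (l i : ℝ)))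
    -- `m` is the minimal Euclidean norm of a nonzero integral point on the
    -- line through `0` parallel to `y - u`
    (m : ℝ)
    (hm : IsLeast {r : ℝ | ∃ (a : Fin n → ℤ) (t : ℝ), a ≠ 0 ∧
        ((fun i => (a i : ℝ)) = t • (y - u)) ∧
        r = Real.sqrt (∑ i, (a i : ℝ) ^ 2)} m) :
    Real.sqrt (∑ i, (u i - y i) ^ 2) / m ≤ |κ - ∑ i, (η i : ℝ) * u i| ∧
    (Real.sqrt (∑ i, (u i - y i) ^ 2) / m = |κ - ∑ i, (η i : ℝ) * u i| ↔
      |∑ i, l i * η i| = 1) := by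
  have hyu (i : Fin n) : y i - u i = c * l i := by simpa using congrFun hdir i
  have hm_eq : m = Real.sqrt (∑ i, (l i : ℝ) ^ 2) :=
    hm.unique (isLeast_sqrt_sum_sq_of_primitive hlprim hc.ne' hdir)
  have hl_norm : 0 < Real.sqrt (∑ i, (l i : ℝ) ^ 2) := by
    obtain ⟨i₀, hi₀⟩ := Function.ne_iff.mp hlprim.1
    have : (l i₀ : ℝ) ≠ 0 := Int.cast_ne_zero.mpr hi₀
    exact Real.sqrt_pos.mpr (sum_pos' (fun i _ => sq_nonneg _) ⟨i₀, mem_univ _, by positivity⟩)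
  have hdist : Real.sqrt (∑ i, (u i - y i) ^ 2) / m = c := by
    have : ∀ i, u i - y i = -c * l i := fun i => by linarith [hyu i]
    simp_rw [this, sqrt_sum_mul_sq, abs_neg, abs_of_pos hc, hm_eq]
    exact mul_div_cancel_right₀ c hl_norm.ne'
  set Z : ℤ := ∑ i, l i * η i
  have hgap : κ - ∑ i, (η i : ℝ) * u i = c * Z := by
    rw [← hyA, ← sum_sub_distrib]
    push_cast [Z, mul_sum]
    exact sum_congr rfl fun i _ => by linear_combination (η i : ℝ) * hyu i
  have hZ : Z ≠ 0 := by
    rintro hZ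
    exact huA (by rw [hZ, Int.cast_zero, mul_zero] at hgap; linarith)
  have hZ1 : (1 : ℝ) ≤ |(Z : ℝ)| := by exact_mod_cast Int.one_le_abs hZ
  rw [hdist, hgap, abs_mul, abs_of_pos hc]
  refine ⟨le_mul_of_one_le_right hc.le hZ1, ?_⟩
  rw [eq_comm, mul_eq_left₀ hc.ne']
  exact_mod_cast Iff.rfl

/-- affine distance to a rational hyperplane is at most `|κ - ⟨u,η⟩|`,
with equality iff the primitive integral direction is integrally transverse. -/
theorem affine_distance_le_ell {n : ℕ} (η l : Fin n → ℤ) (κ : ℝ)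
    (hηprim : η ≠ 0 ∧ ∀ d : ℤ, (∀ i, d ∣ η i) → IsUnit d)
    (hlprim : l ≠ 0 ∧ ∀ d : ℤ, (∀ i, d ∣ l i) → IsUnit d)
    (u y : Fin n → ℝ)
    (hu_rat : ∀ i, ∃ q : ℚ, u i = (q : ℝ)) (hy_rat : ∀ i, ∃ q : ℚ, y i = (q : ℝ))
    (hyA : ∑ i, (η i : ℝ) * y i = κ)
    (huA : ∑ i, (η i : ℝ) * u i ≠ κ)
    -- `l` is the primitive integral vector in the direction `y - u`
    (c : ℝ) (hc : 0 < c) (hdir : y - u = c • (fun i => (l i : ℝ)))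
    -- `m` is the minimal Euclidean norm of a nonzero integral point on the
    -- line through `0` parallel to `y - u`
    (m : ℝ)
    (hm : IsLeast {r : ℝ | ∃ (a : Fin n → ℤ) (t : ℝ), a ≠ 0 ∧
        ((fun i => (a i : ℝ)) = t • (y - u)) ∧
        r = Real.sqrt (∑ i, (a i : ℝ) ^ 2)} m) :
    Real.sqrt (∑ i, (u i - y i) ^ 2) / m ≤ |κ - ∑ i, (η i : ℝ) * u i| ∧
    (Real.sqrt (∑ i, (u i - y i) ^ 2) / m = |κ - ∑ i, (η i : ℝ) * u i| ↔
      |∑ i, l i * η i| = 1) :=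
  affine_distance_le_ell_general η l κ hlprim u y hyA huA c hc hdir m hm
end

section
/- Let Δ ⊂ ℝⁿ be a monotone polytope (interior lattice point 0) and suppose there is a vertex v such that every face of Δ containing v satisfies the star Ewald condition. Then 𝒮(Δ) contains a ℤ-basis of ℤⁿ (the weak Ewald condition). -/
open Finset

/-- Dot product of an integral vector with a real vector. -/
def dotz {n : ℕ} (a : Fin n → ℤ) (x : Fin n → ℝ) : ℝ := ∑ i, (a i : ℝ) * x i

/-- `x` is a lattice point. -/
def IsLatticePt {n : ℕ} (x : Fin n → ℝ) : Prop := ∀ i, ∃ z : ℤ, x i = (z : ℝ)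

/-- A nonzero integral vector is primitive. -/
def IsPrimitiveZ {n : ℕ} (a : Fin n → ℤ) : Prop :=
  a ≠ 0 ∧ ∀ d : ℤ, (∀ i, d ∣ a i) → IsUnit d

/-- A real vector that is a primitive integral vector. -/
def IsPrimIntVec {n : ℕ} (x : Fin n → ℝ) : Prop :=
  ∃ a : Fin n → ℤ, IsPrimitiveZ a ∧ x = fun i => (a i : ℝ)

/-- `v` is a vertex (extreme point) of `Δ`. -/
def IsVertex {n : ℕ} (Δ : Set (Fin n → ℝ)) (v : Fin n → ℝ) : Prop :=
  v ∈ Δ ∧ IsExtreme ℝ Δ {v}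

/-- `e` points from the vertex `v` along an edge (one-dimensional face) of `Δ`. -/
def IsEdgeDir {n : ℕ} (Δ : Set (Fin n → ℝ)) (v e : Fin n → ℝ) : Prop :=
  ∃ t : ℝ, 0 < t ∧ IsExtreme ℝ Δ (segment ℝ v (v + t • e))

/-- The vertex-Fano condition at `v`, together with smoothness: the primitive integral
edge vectors `e i` at the vertex `v` form a `ℤ`-basis and satisfy `v + ∑ e i = u₀`. -/
def VertexFanoSmoothAt {n : ℕ} (Δ : Set (Fin n → ℝ)) (u₀ v : Fin n → ℝ) : Prop :=
  ∃ e : Fin n → (Fin n → ℝ), Function.Injective e ∧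
    (∀ i, IsPrimIntVec (e i) ∧ IsEdgeDir Δ v (e i)) ∧
    (∀ z : Fin n → ℤ, ∃ c : Fin n → ℤ, (fun j => (z j : ℝ)) = ∑ i, (c i : ℝ) • e i) ∧
    v + ∑ i, e i = u₀

/-- The set of indices of facets containing the face `⋂ i ∈ I, F i`. -/
def StarIdx {n N : ℕ} (F : Fin N → Set (Fin n → ℝ)) (I : Set (Fin N)) : Set (Fin N) :=
  {i | (⋂ i' ∈ I, F i') ⊆ F i}

/-- `Star(f)`: the union of the facets containing the face `f = ⋂ i ∈ I, F i`. -/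
def StarU {n N : ℕ} (F : Fin N → Set (Fin n → ℝ)) (I : Set (Fin N)) : Set (Fin n → ℝ) :=
  ⋃ i ∈ StarIdx F I, F i

/-- `star(f)`: the union of the codimension-2 faces `Fᵢ ∩ Fⱼ`, `i ≠ j`, containing `f`. -/
def starLowerU {n N : ℕ} (F : Fin N → Set (Fin n → ℝ)) (I : Set (Fin N)) : Set (Fin n → ℝ) :=
  ⋃ i ∈ StarIdx F I, ⋃ j ∈ StarIdx F I, ⋃ (_ : i ≠ j), F i ∩ F j

/-- The star Ewald condition for the face `⋂ i ∈ I, F i` of `Δ`. -/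
def StarEwald {n N : ℕ} (Δ : Set (Fin n → ℝ)) (F : Fin N → Set (Fin n → ℝ))
    (I : Set (Fin N)) : Prop :=
  ∃ l : Fin n → ℤ, l ≠ 0 ∧ (fun j => (l j : ℝ)) ∈ Δ ∧ (fun j => -(l j : ℝ)) ∈ Δ ∧
    (fun j => (l j : ℝ)) ∈ StarU F I \ starLowerU F I ∧
    (fun j => -(l j : ℝ)) ∉ StarU F I

/-!
At the vertex `v` the primitive edge vectors `a j` form a lattice basis with `v + ∑ a j = 0`.
Each facet `i` through `v` pairs nonpositively with every `a j`, with total `-1`, so it pairs to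
`-1` with exactly one `a (τ i)` and to `0` with the others; extremality of `v` makes `τ`
surjective. Hence a lattice point `l = ∑ c j • a j` pairs with facet `i` to `-c (τ i)`.
Suppose `a j` lies in the span of `𝒮(Δ)` for `j ∈ J`, and let `l` be the star Ewald vector of
the face cut out by the facets `i` with `τ i ∉ J`. It lies on a facet `k` through that face, and
since `l ∉ star` and `-l ∉ Star` it pairs to `0` with every other facet through the face. So
`c (τ k) = -1` and `c j = 0` for the other `j ∉ J`, and `τ k ∉ J`: modulo the span of the `a j`,
`j ∈ J`, we get `a (τ k) ≡ -l`, and `J` grows by one. After `n` steps `𝒮(Δ)` spans `ℤⁿ`.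
-/

open Submodule

def polyOf {n N : ℕ} (η : Fin N → Fin n → ℤ) : Set (Fin n → ℝ) :=
  {x | ∀ i, dotz (η i) x ≤ 1}

def facetOf {n N : ℕ} (η : Fin N → Fin n → ℤ) (i : Fin N) : Set (Fin n → ℝ) :=
  {x ∈ polyOf η | dotz (η i) x = 1}

def symmetricLatticePoints {n : ℕ} (Δ : Set (Fin n → ℝ)) : Set (Fin n → ℤ) :=
  {l | l ≠ 0 ∧ (fun j => (l j : ℝ)) ∈ Δ ∧ (fun j => -(l j : ℝ)) ∈ Δ}

section SpanExtension

variable {R M ι : Type*} [Ring R] [AddCommGroup M] [Module R M] [DecidableEq ι]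
  {a : ι → M} {S : Set M}

lemma sum_smul_add_mem_span_image [Fintype ι] {c : ι → R} {J : Finset ι} {j : ι}
    (hcj : c j = -1) (hc : ∀ k ∉ J, k ≠ j → c k = 0) :
    ∑ k, c k • a k + a j ∈ span R (a '' J) := by
  have hsum : ∑ k, c k • a k + a j = ∑ k ∈ univ.erase j, c k • a k := by
    rw [← add_sum_erase _ _ (mem_univ j), hcj, neg_one_smul]
    abel
  rw [hsum]
  refine sum_mem fun k hk => ?_
  by_cases hkJ : k ∈ J
  · exact smul_mem _ _ (subset_span (Set.mem_image_of_mem a hkJ))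
  · rw [hc k hkJ (ne_of_mem_erase hk), zero_smul]
    exact zero_mem _

lemma exists_update_span_image_insert {J : Finset ι} {b : ι → M}
    (hbS : ∀ k ∈ J, b k ∈ S) (hb : span R (a '' J) ≤ span R (b '' J))
    {j : ι} (hj : j ∉ J) {l : M} (hl : l ∈ S) (hla : l + a j ∈ span R (a '' J)) :
    ∃ b' : ι → M, (∀ k ∈ insert j J, b' k ∈ S) ∧
      span R (a '' ↑(insert j J)) ≤ span R (b' '' ↑(insert j J)) := by
  have hbb' : span R (b '' J) ≤ span R (Function.update b j l '' ↑(insert j J)) := by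
    rw [show b '' J = Function.update b j l '' J from Set.image_congr fun k hk =>
      (Function.update_of_ne (ne_of_mem_of_not_mem hk hj) l b).symm]
    exact span_mono (Set.image_mono (by simp))
  refine ⟨Function.update b j l, fun k hk => ?_, span_le.2 fun x hx => ?_⟩
  · rcases mem_insert.1 hk with rfl | hk
    · simpa using hl
    · rw [Function.update_of_ne (ne_of_mem_of_not_mem hk hj)]
      exact hbS k hk
  · rw [coe_insert, Set.image_insert_eq] at hx
    rcases hx with rfl | hx
    · have hl' : l ∈ span R (Function.update b j l '' ↑(insert j J)) :=
        subset_span ⟨j, by simp, Function.update_self j l b⟩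
      simpa using sub_mem (hbb' (hb hla)) hl'
    · exact hbb' (hb (subset_span hx))

lemma exists_span_range_ge_of_forall_exists_add_mem_span [Fintype ι]
    (h : ∀ J : Finset ι, J ≠ univ → ∃ j ∉ J, ∃ l ∈ S, l + a j ∈ span R (a '' J)) :
    ∃ b : ι → M, (∀ i, b i ∈ S) ∧ span R (Set.range a) ≤ span R (Set.range b) := by
  classical
  let P : Finset ι → Prop := fun J =>
    ∃ b : ι → M, (∀ k ∈ J, b k ∈ S) ∧ span R (a '' J) ≤ span R (b '' J)
  obtain ⟨J, hJ, hmax⟩ := exists_max_image (univ.filter P) card ⟨∅, by simp [P]⟩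
  obtain ⟨b, hbS, hb⟩ := (mem_filter.1 hJ).2
  obtain rfl : J = univ := by
    by_contra hne
    obtain ⟨j, hj, l, hl, hla⟩ := h J hne
    have := hmax _ (mem_filter.2 ⟨mem_univ _, exists_update_span_image_insert hbS hb hj hl hla⟩)
    rw [card_insert_of_notMem hj] at this
    omega
  exact ⟨b, fun i => hbS i (mem_univ i), by simpa using hb⟩

end SpanExtension

lemma Int.exists_eq_ite_of_nonpos_of_sum_eq_neg_one {ι : Type*} [Fintype ι] [DecidableEq ι]
    {f : ι → ℤ} (hf : ∀ j, f j ≤ 0) (hsum : ∑ j, f j = -1) :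
    ∃ j₀, ∀ j, f j = if j = j₀ then -1 else 0 := by
  obtain ⟨j₀, hj₀⟩ : ∃ j₀, f j₀ < 0 := by
    by_contra! h
    have := sum_nonneg fun j (_ : j ∈ univ) => h j
    omega
  have hrest : ∑ j ∈ univ.erase j₀, f j ≤ 0 := sum_nonpos fun j _ => hf j
  rw [← add_sum_erase _ _ (mem_univ j₀)] at hsum
  have hrest0 : ∑ j ∈ univ.erase j₀, f j = 0 := by omega
  refine ⟨j₀, fun j => ?_⟩
  split_ifs with h
  · subst h
    omega
  · exact (sum_eq_zero_iff_of_nonpos fun k _ => hf k).1 hrest0 j (mem_erase.2 ⟨h, mem_univ j⟩)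

lemma top_le_span_range_of_intCast {n : ℕ} {ι : Type*} [Fintype ι] {a : ι → Fin n → ℤ}
    (h : ∀ z : Fin n → ℤ, ∃ c : ι → ℤ,
      (fun j => (z j : ℝ)) = ∑ i, (c i : ℝ) • fun k => (a i k : ℝ)) :
    ⊤ ≤ span ℤ (Set.range a) := by
  refine (top_le_span_range_iff_forall_exists_fun ℤ).2 fun z => ?_
  obtain ⟨c, hc⟩ := h z
  refine ⟨c, funext fun j => ?_⟩
  have := congrFun hc j
  simp only [Finset.sum_apply, Pi.smul_apply, smul_eq_mul] at this ⊢
  exact_mod_cast this.symm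

section Dotz

variable {n : ℕ} (u : Fin n → ℤ)

lemma dotz_add (x y : Fin n → ℝ) : dotz u (x + y) = dotz u x + dotz u y := by
  simp [dotz, mul_add, sum_add_distrib]

lemma dotz_smul (t : ℝ) (x : Fin n → ℝ) : dotz u (t • x) = t * dotz u x := by
  simp only [dotz, Pi.smul_apply, smul_eq_mul, mul_sum]
  exact sum_congr rfl fun k _ => by ring

lemma dotz_sum {m : ℕ} (f : Fin m → Fin n → ℝ) : dotz u (∑ j, f j) = ∑ j, dotz u (f j) := by
  simp only [dotz, Finset.sum_apply, mul_sum]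
  exact sum_comm

lemma dotz_zero : dotz u (0 : Fin n → ℝ) = 0 := by
  simp [dotz]

lemma dotz_intCast (l : Fin n → ℤ) : dotz u (fun k => (l k : ℝ)) = ((u ⬝ᵥ l : ℤ) : ℝ) := by
  simp [dotz, dotProduct]

lemma dotz_neg_intCast (l : Fin n → ℤ) :
    dotz u (fun k => -(l k : ℝ)) = -((u ⬝ᵥ l : ℤ) : ℝ) := by
  simp [dotz, dotProduct]

end Dotz

section Polytope

variable {n N : ℕ} {η : Fin N → Fin n → ℤ}

lemma intCast_mem_facetOf_iff {l : Fin n → ℤ} (hl : (fun j => (l j : ℝ)) ∈ polyOf η)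
    (i : Fin N) : (fun j => (l j : ℝ)) ∈ facetOf η i ↔ η i ⬝ᵥ l = 1 := by
  simp only [facetOf, Set.mem_ofPred_eq, hl, true_and, dotz_intCast]
  exact_mod_cast Iff.rfl

lemma neg_intCast_mem_facetOf_iff {l : Fin n → ℤ} (hl : (fun j => -(l j : ℝ)) ∈ polyOf η)
    (i : Fin N) : (fun j => -(l j : ℝ)) ∈ facetOf η i ↔ η i ⬝ᵥ l = -1 := by
  simp only [facetOf, Set.mem_ofPred_eq, hl, true_and, dotz_neg_intCast, neg_eq_iff_eq_neg]
  exact_mod_cast Iff.rfl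

lemma dotProduct_mem_Icc_of_mem_polyOf {l : Fin n → ℤ} (hl : (fun j => (l j : ℝ)) ∈ polyOf η)
    (hnl : (fun j => -(l j : ℝ)) ∈ polyOf η) (i : Fin N) : η i ⬝ᵥ l ∈ Set.Icc (-1) 1 := by
  have h₁ := hl i
  have h₂ := hnl i
  rw [dotz_intCast] at h₁
  rw [dotz_neg_intCast] at h₂
  have h₁' : η i ⬝ᵥ l ≤ 1 := by exact_mod_cast h₁
  have h₂' : -(η i ⬝ᵥ l) ≤ 1 := by exact_mod_cast h₂
  exact ⟨by omega, h₁'⟩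

lemma dotProduct_eq_zero_of_notMem_star {I : Set (Fin N)} {i k : Fin N} {l : Fin n → ℤ}
    (hl : (fun j => (l j : ℝ)) ∈ polyOf η) (hnl : (fun j => -(l j : ℝ)) ∈ polyOf η)
    (hi : i ∈ StarIdx (facetOf η) I) (hk : k ∈ StarIdx (facetOf η) I) (hik : i ≠ k)
    (hlk : (fun j => (l j : ℝ)) ∈ facetOf η k)
    (hlstar : (fun j => (l j : ℝ)) ∉ starLowerU (facetOf η) I)
    (hnlStar : (fun j => -(l j : ℝ)) ∉ StarU (facetOf η) I) :
    η i ⬝ᵥ l = 0 := by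
  have hne₁ : η i ⬝ᵥ l ≠ 1 := fun h => hlstar <| Set.mem_biUnion hi <| Set.mem_biUnion hk <|
    Set.mem_iUnion.2 ⟨hik, (intCast_mem_facetOf_iff hl i).2 h, hlk⟩
  have hne₂ : η i ⬝ᵥ l ≠ -1 := fun h =>
    hnlStar <| Set.mem_biUnion hi <| (neg_intCast_mem_facetOf_iff hnl i).2 h
  have := dotProduct_mem_Icc_of_mem_polyOf hl hnl i
  simp only [Set.mem_Icc] at this
  omega

lemma dotz_nonpos_of_isEdgeDir {v w : Fin n → ℝ} (he : IsEdgeDir (polyOf η) v w) {i : Fin N}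
    (hi : dotz (η i) v = 1) : dotz (η i) w ≤ 0 := by
  obtain ⟨t, ht, hseg⟩ := he
  have := hseg.subset (right_mem_segment ℝ v (v + t • w)) i
  rw [dotz_add, dotz_smul, hi] at this
  nlinarith

/-- Otherwise `v` would be the midpoint of a small segment in direction `w`. -/
lemma eq_zero_of_forall_tight_dotz_eq_zero {v w : Fin n → ℝ} (hv : IsVertex (polyOf η) v)
    (hw : ∀ i, dotz (η i) v = 1 → dotz (η i) w = 0) : w = 0 := by
  have hmem : ∀ᶠ t in nhds (0 : ℝ), v + t • w ∈ polyOf η := by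
    refine Filter.eventually_all.2 fun i => ?_
    by_cases hi : dotz (η i) v = 1
    · exact Filter.Eventually.of_forall fun t => by rw [dotz_add, dotz_smul, hi, hw i hi]; simp
    · have hlt : dotz (η i) v < 1 := lt_of_le_of_ne (hv.1 i) hi
      have hcont : Filter.Tendsto (fun t : ℝ => dotz (η i) (v + t • w)) (nhds 0)
          (nhds (dotz (η i) v)) := by
        simp only [dotz_add, dotz_smul]
        exact (by fun_prop : Continuous fun t : ℝ => dotz (η i) v + t * dotz (η i) w).tendsto' 0 _
          (by simp)
      exact (hcont.eventually (gt_mem_nhds hlt)).mono fun t ht => ht.le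
  have hmem' : ∀ᶠ t in nhds (0 : ℝ), v + (-t) • w ∈ polyOf η :=
    (continuous_neg.tendsto' 0 0 neg_zero).eventually hmem
  obtain ⟨t, ⟨hp, hm⟩, ht⟩ :=
    ((hmem.and hmem').filter_mono nhdsWithin_le_nhds |>.and self_mem_nhdsWithin).exists
      (f := nhdsWithin (0 : ℝ) (Set.Ioi 0))
  have hseg : v ∈ openSegment ℝ (v + t • w) (v + (-t) • w) :=
    ⟨1 / 2, 1 / 2, by norm_num, by norm_num, by norm_num, by module⟩
  have := hv.2.left_mem_of_mem_openSegment hp hm rfl hseg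
  simpa [ht.ne'] using this

end Polytope

section Vertex

variable {n N : ℕ} {η : Fin N → Fin n → ℤ} {v : Fin n → ℝ} {a : Fin n → Fin n → ℤ}
  {τ : Fin N → Fin n}

lemma exists_dotProduct_eq_ite_of_tight
    (hedge : ∀ j, IsEdgeDir (polyOf η) v fun k => (a j k : ℝ))
    (hsum : v + ∑ j, (fun k => (a j k : ℝ)) = 0) {i : Fin N} (hi : dotz (η i) v = 1) :
    ∃ j₀, ∀ j, η i ⬝ᵥ a j = if j = j₀ then -1 else 0 := by
  refine Int.exists_eq_ite_of_nonpos_of_sum_eq_neg_one (fun j => ?_) ?_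
  · have := dotz_nonpos_of_isEdgeDir (hedge j) hi
    rw [dotz_intCast] at this
    exact_mod_cast this
  · have := congrArg (dotz (η i)) hsum
    simp only [dotz_add, dotz_sum, hi, dotz_zero, dotz_intCast] at this
    exact_mod_cast (by push_cast; linarith : ((∑ j, η i ⬝ᵥ a j : ℤ) : ℝ) = -1)

lemma exists_tight_eq_of_isVertex (hv : IsVertex (polyOf η) v)
    (hτ : ∀ i, dotz (η i) v = 1 → ∀ j, η i ⬝ᵥ a j = if j = τ i then -1 else 0)
    {j : Fin n} (ha : a j ≠ 0) : ∃ i, dotz (η i) v = 1 ∧ τ i = j := by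
  by_contra! h
  refine ha (funext fun k => ?_)
  have := eq_zero_of_forall_tight_dotz_eq_zero (w := fun k => (a j k : ℝ)) hv fun i hi => by
    rw [dotz_intCast, hτ i hi, if_neg (h i hi).symm, Int.cast_zero]
  simpa using congrFun this k

lemma dotProduct_sum_smul_eq_neg {i : Fin N}
    (hτi : ∀ j, η i ⬝ᵥ a j = if j = τ i then -1 else 0) (c : Fin n → ℤ) :
    η i ⬝ᵥ ∑ j, c j • a j = -c (τ i) := by
  simp only [dotProduct_sum, dotProduct_smul, hτi, smul_eq_mul, mul_ite, mul_neg, mul_one,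
    mul_zero, sum_ite_eq', mem_univ, if_true]

lemma edge_point_mem_facetOf_iff {t : ℝ} (ht : 0 < t) {j : Fin n}
    (hw : v + t • (fun k => (a j k : ℝ)) ∈ polyOf η) {i : Fin N} (hi : dotz (η i) v = 1)
    (hτi : ∀ j, η i ⬝ᵥ a j = if j = τ i then -1 else 0) :
    v + t • (fun k => (a j k : ℝ)) ∈ facetOf η i ↔ τ i ≠ j := by
  simp only [facetOf, Set.mem_ofPred_eq, hw, true_and, dotz_add, dotz_smul, hi, dotz_intCast,
    hτi]
  split_ifs with h <;> simp [h, eq_comm, ht.ne']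

/-- Moving from `v` along the edge `a (τ k)` leaves the facet `k` but no facet `i` with
`τ i ≠ τ k`. -/
lemma notMem_of_mem_starIdx (hedge : ∀ j, IsEdgeDir (polyOf η) v fun k => (a j k : ℝ))
    (hτ : ∀ i, dotz (η i) v = 1 → ∀ j, η i ⬝ᵥ a j = if j = τ i then -1 else 0)
    {J : Finset (Fin n)} {k : Fin N}
    (hk : k ∈ StarIdx (facetOf η) {i | dotz (η i) v = 1 ∧ τ i ∉ J})
    (hkv : dotz (η k) v = 1) : τ k ∉ J := by
  intro hkJ
  obtain ⟨t, ht, hseg⟩ := hedge (τ k)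
  have hw := hseg.subset (right_mem_segment ℝ _ _)
  have hwk := hk <| Set.mem_iInter₂.2 fun i hi =>
    (edge_point_mem_facetOf_iff ht hw hi.1 (hτ i hi.1)).2 fun h => hi.2 (h ▸ hkJ)
  exact (edge_point_mem_facetOf_iff ht hw hkv (hτ k hkv)).1 hwk rfl

lemma exists_add_mem_span_of_starEwald (hvΔ : v ∈ polyOf η)
    (hedge : ∀ j, IsEdgeDir (polyOf η) v fun k => (a j k : ℝ))
    (hτ : ∀ i, dotz (η i) v = 1 → ∀ j, η i ⬝ᵥ a j = if j = τ i then -1 else 0)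
    (hsurj : ∀ j, ∃ i, dotz (η i) v = 1 ∧ τ i = j) (hbasis : ⊤ ≤ span ℤ (Set.range a))
    {J : Finset (Fin n)}
    (hstar : StarEwald (polyOf η) (facetOf η) {i | dotz (η i) v = 1 ∧ τ i ∉ J}) :
    ∃ j ∉ J, ∃ l ∈ symmetricLatticePoints (polyOf η), l + a j ∈ span ℤ (a '' J) := by
  obtain ⟨l, hl0, hl, hnl, ⟨hlStar, hlstar⟩, hnlStar⟩ := hstar
  obtain ⟨k, hkI, hlk⟩ : ∃ k ∈ StarIdx (facetOf η) {i | dotz (η i) v = 1 ∧ τ i ∉ J},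
      (fun j => (l j : ℝ)) ∈ facetOf η k := by
    simpa [StarU] using hlStar
  have hkv : dotz (η k) v = 1 := (hkI (Set.mem_iInter₂.2 fun i hi => ⟨hvΔ, hi.1⟩)).2
  obtain ⟨c, rfl⟩ := (top_le_span_range_iff_forall_exists_fun ℤ).1 hbasis l
  refine ⟨τ k, notMem_of_mem_starIdx hedge hτ hkI hkv, _, ⟨hl0, hl, hnl⟩,
    sum_smul_add_mem_span_image ?_ fun j hjJ hjk => ?_⟩
  · have := (intCast_mem_facetOf_iff hl k).1 hlk
    rw [dotProduct_sum_smul_eq_neg (hτ k hkv)] at this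
    omega
  · obtain ⟨i, hiv, rfl⟩ := hsurj j
    have hiI : i ∈ StarIdx (facetOf η) {i | dotz (η i) v = 1 ∧ τ i ∉ J} :=
      Set.biInter_subset_of_mem (show i ∈ {i | dotz (η i) v = 1 ∧ τ i ∉ J} from ⟨hiv, hjJ⟩)
    have := dotProduct_eq_zero_of_notMem_star hl hnl hiI hkI (fun h => hjk (h ▸ rfl)) hlk
      hlstar hnlStar
    rw [dotProduct_sum_smul_eq_neg (hτ i hiv)] at this
    omega

end Vertex

theorem star_ewald_at_vertex_implies_weak_ewald_general {n N : ℕ}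
    (η : Fin N → Fin n → ℤ)
    (Δ : Set (Fin n → ℝ)) (hΔ : Δ = {x | ∀ i, dotz (η i) x ≤ 1})
    (hfano : ∀ v, IsVertex Δ v → VertexFanoSmoothAt Δ 0 v)
    (F : Fin N → Set (Fin n → ℝ)) (hF : ∀ i, F i = {x ∈ Δ | dotz (η i) x = 1})
    (v : Fin n → ℝ) (hv : IsVertex Δ v)
    -- every face of `Δ` containing the vertex `v` satisfies the star Ewald condition
    (hstarE : ∀ I : Set (Fin N), I.Nonempty → (∀ i ∈ I, v ∈ F i) → StarEwald Δ F I) :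
    ∃ b : Fin n → (Fin n → ℤ),
      (∀ i, b i ≠ 0 ∧ (fun j => (b i j : ℝ)) ∈ Δ ∧ (fun j => -(b i j : ℝ)) ∈ Δ) ∧
      (∀ z : Fin n → ℤ, ∃ c : Fin n → ℤ, ∀ j, z j = ∑ i, c i * b i j) := by
  obtain rfl : Δ = polyOf η := hΔ
  obtain rfl : F = facetOf η := funext hF
  cases isEmpty_or_nonempty (Fin n)
  · exact ⟨isEmptyElim, isEmptyElim, fun _ => ⟨0, isEmptyElim⟩⟩
  obtain ⟨e, -, hedge, hspan, hsum⟩ := hfano v hv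
  choose a ha using fun j => (hedge j).1
  obtain rfl : e = fun j k => (a j k : ℝ) := funext fun j => (ha j).2
  choose! τ hτ using fun i (hi : dotz (η i) v = 1) =>
    exists_dotProduct_eq_ite_of_tight (fun j => (hedge j).2) hsum hi
  have hsurj j := exists_tight_eq_of_isVertex hv hτ (ha j).1.1
  have hbasis := top_le_span_range_of_intCast hspan
  have hface (J : Finset (Fin n)) (hJ : J ≠ univ) :
      {i | dotz (η i) v = 1 ∧ τ i ∉ J}.Nonempty := by
    obtain ⟨j, hj⟩ := not_forall.1 (mt eq_univ_iff_forall.2 hJ)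
    obtain ⟨i, hi, rfl⟩ := hsurj j
    exact ⟨i, hi, hj⟩
  obtain ⟨b, hbS, hb⟩ := exists_span_range_ge_of_forall_exists_add_mem_span (R := ℤ)
    fun J hJ => exists_add_mem_span_of_starEwald hv.1 (fun j => (hedge j).2) hτ hsurj hbasis <|
      hstarE _ (hface J hJ) fun i hi => ⟨hv.1, hi.1⟩
  refine ⟨b, hbS, fun z => ?_⟩
  obtain ⟨c, hc⟩ := (top_le_span_range_iff_forall_exists_fun ℤ).1 (hbasis.trans hb) z
  exact ⟨c, fun j => by simp [← hc, Finset.sum_apply]⟩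

/-- if a monotone polytope has a vertex all of whose faces satisfy the
star Ewald condition, then `𝒮(Δ)` contains a `ℤ`-basis (the weak Ewald condition). -/
theorem star_ewald_at_vertex_implies_weak_ewald {n N : ℕ}
    (η : Fin N → Fin n → ℤ) (hprim : ∀ i, IsPrimitiveZ (η i))
    (Δ : Set (Fin n → ℝ)) (hΔ : Δ = {x | ∀ i, dotz (η i) x ≤ 1})
    (hcpt : IsCompact Δ) (h0 : (0 : Fin n → ℝ) ∈ interior Δ)
    (huniq : ∀ w, IsLatticePt w → w ∈ interior Δ → w = 0)
    (hvlat : ∀ v, IsVertex Δ v → IsLatticePt v)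
    (hfano : ∀ v, IsVertex Δ v → VertexFanoSmoothAt Δ 0 v)
    (F : Fin N → Set (Fin n → ℝ)) (hF : ∀ i, F i = {x ∈ Δ | dotz (η i) x = 1})
    (v : Fin n → ℝ) (hv : IsVertex Δ v)
    -- every face of `Δ` containing the vertex `v` satisfies the star Ewald condition
    (hstarE : ∀ I : Set (Fin N), I.Nonempty → (∀ i ∈ I, v ∈ F i) → StarEwald Δ F I) :
    ∃ b : Fin n → (Fin n → ℤ),
      (∀ i, b i ≠ 0 ∧ (fun j => (b i j : ℝ)) ∈ Δ ∧ (fun j => -(b i j : ℝ)) ∈ Δ) ∧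
      (∀ z : Fin n → ℤ, ∃ c : Fin n → ℤ, ∀ j, z j = ∑ i, c i * b i j) :=
  star_ewald_at_vertex_implies_weak_ewald_general η Δ hΔ hfano F hF v hv hstarE
end

section
/- Let Δ ⊂ ℝⁿ be a monotone polytope with interior lattice point 0, and suppose facets F₁, F₂ meet in a codimension-2 face f = F₁ ∩ F₂. Choose coordinates so that F₁ = Δ ∩ {x₁ = −1} and F₂ = Δ ∩ {x₂ = −1}. If F₁ ∩ 𝒮(Δ) contains a ℤ-basis v₁,…,vₙ of ℤⁿ, then there exists v ∈ 𝒮(Δ) with v ∈ F₁ ∖ f and −v ∉ F₁ ∪ F₂; i.e., f satisfies the star Ewald condition. In particular, it is impossible for every element of a lattice basis contained in F₁ ∩ 𝒮(Δ) to have second coordinate equal to ±1. -/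
open Finset

/-!
If every vector of a family agrees in parity at coordinates `p` and `q`, so does every integer
combination of them; the unit vector `e_p` is not such a combination, so a family spanning `ℤⁿ`
with all `p`-coordinates odd has a member with even `q`-coordinate. For a basis of symmetric
points in `F₁ = {x₀ = -1}` that member has second coordinate `0`, and it is the star Ewald
witness.
-/

section Parity

variable {ι m : Type*} [Fintype ι] (v : ι → m → ℤ)

theorem sum_mul_coord_modEq {k : ℤ} {p q : m} (hv : ∀ i, v i p ≡ v i q [ZMOD k])
    (c : ι → ℤ) :
    ∑ i, c i * v i p ≡ ∑ i, c i * v i q [ZMOD k] :=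
  Int.ModEq.sum fun i _ => (hv i).mul_left (c i)

theorem exists_even_coord_of_spans [DecidableEq m]
    (hspan : ∀ z : m → ℤ, ∃ c : ι → ℤ, ∀ j, z j = ∑ i, c i * v i j)
    {p q : m} (hpq : p ≠ q) (hp : ∀ i, Odd (v i p)) : ∃ i, Even (v i q) := by
  by_contra! hq
  have hv : ∀ i, v i p ≡ v i q [ZMOD 2] := fun i =>
    (Int.odd_iff.mp (hp i)).trans (Int.odd_iff.mp (Int.not_even_iff_odd.mp (hq i))).symm
  obtain ⟨c, hc⟩ := hspan (Pi.single p 1)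
  have h := sum_mul_coord_modEq v hv c
  rw [← hc p, ← hc q, Pi.single_eq_same, Pi.single_eq_of_ne hpq.symm] at h
  exact absurd h (by decide)

end Parity

theorem codim_two_star_ewald_general {n : ℕ}
    (Δ : Set (Fin (n + 2) → ℝ))
    -- in these coordinates all symmetric lattice points have coordinates in {-1,0,1}
    (hScoords : ∀ l : Fin (n + 2) → ℤ, l ≠ 0 →
      (fun i => (l i : ℝ)) ∈ Δ → (fun i => -(l i : ℝ)) ∈ Δ →
      ∀ i, l i = -1 ∨ l i = 0 ∨ l i = 1)
    -- a lattice basis `v₁, …, v_{n+2}` of symmetric points lying in `F₁`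
    (v : Fin (n + 2) → (Fin (n + 2) → ℤ))
    (hvS : ∀ i, v i ≠ 0 ∧ (fun j => (v i j : ℝ)) ∈ Δ ∧ (fun j => -(v i j : ℝ)) ∈ Δ)
    (hvF1 : ∀ i, v i 0 = -1)
    (hbasis : ∀ z : Fin (n + 2) → ℤ, ∃ c : Fin (n + 2) → ℤ, ∀ j, z j = ∑ i, c i * v i j) :
    (∃ w : Fin (n + 2) → ℤ, w ≠ 0 ∧
      (fun j => (w j : ℝ)) ∈ Δ ∧ (fun j => -(w j : ℝ)) ∈ Δ ∧
      -- `w ∈ F₁ ∖ f`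
      w 0 = -1 ∧ w 1 ≠ -1 ∧
      -- `-w ∉ F₁ ∪ F₂`
      (-(w 0) ≠ -1 ∧ -(w 1) ≠ -1)) ∧
    -- it is impossible for every basis element to have second coordinate `±1`
    (∃ i, v i 1 ≠ 1 ∧ v i 1 ≠ -1) := by
  have hodd : ∀ i, Odd (v i 0) := fun i => by rw [hvF1 i]; decide
  obtain ⟨i, heven⟩ := exists_even_coord_of_spans v hbasis (q := 1) zero_ne_one hodd
  obtain ⟨hne, hmem, hneg⟩ := hvS i
  have hvi1 : v i 1 = 0 := by
    obtain ⟨r, hr⟩ := heven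
    rcases hScoords (v i) hne hmem hneg 1 with h | h | h <;> omega
  refine ⟨⟨v i, hne, hmem, hneg, hvF1 i, ?_⟩, ⟨i, ?_⟩⟩ <;> simp [hvi1, hvF1 i]

/-- if a facet `F₁ = Δ ∩ {x₀ = -1}` of a monotone polytope contains a
`ℤ`-basis of symmetric lattice points, then the codimension-2 face `f = F₁ ∩ F₂`
(with `F₂ = Δ ∩ {x₁ = -1}`) satisfies the star Ewald condition; in particular some
basis element has second coordinate `0`. -/
theorem codim_two_star_ewald {n : ℕ}
    (V : Finset (Fin (n + 2) → ℝ)) (hVlat : ∀ v ∈ V, IsLatticePt v)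
    (Δ : Set (Fin (n + 2) → ℝ)) (hΔ : Δ = convexHull ℝ (V : Set (Fin (n + 2) → ℝ)))
    (h0 : (0 : Fin (n + 2) → ℝ) ∈ interior Δ)
    (huniq : ∀ w, IsLatticePt w → w ∈ interior Δ → w = 0)
    (hfano : ∀ v, IsVertex Δ v → VertexFanoSmoothAt Δ 0 v)
    -- the facets `F₁`, `F₂` lie on the hyperplanes `x₀ = -1`, `x₁ = -1`
    (hhalf0 : ∀ x ∈ Δ, -1 ≤ x 0) (hhalf1 : ∀ x ∈ Δ, -1 ≤ x 1)
    -- in these coordinates all symmetric lattice points have coordinates in {-1,0,1}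
    (hScoords : ∀ l : Fin (n + 2) → ℤ, l ≠ 0 →
      (fun i => (l i : ℝ)) ∈ Δ → (fun i => -(l i : ℝ)) ∈ Δ →
      ∀ i, l i = -1 ∨ l i = 0 ∨ l i = 1)
    -- a lattice basis `v₁, …, v_{n+2}` of symmetric points lying in `F₁`
    (v : Fin (n + 2) → (Fin (n + 2) → ℤ))
    (hvS : ∀ i, v i ≠ 0 ∧ (fun j => (v i j : ℝ)) ∈ Δ ∧ (fun j => -(v i j : ℝ)) ∈ Δ)
    (hvF1 : ∀ i, v i 0 = -1)
    (hbasis : ∀ z : Fin (n + 2) → ℤ, ∃ c : Fin (n + 2) → ℤ, ∀ j, z j = ∑ i, c i * v i j) :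
    (∃ w : Fin (n + 2) → ℤ, w ≠ 0 ∧
      (fun j => (w j : ℝ)) ∈ Δ ∧ (fun j => -(w j : ℝ)) ∈ Δ ∧
      -- `w ∈ F₁ ∖ f`
      w 0 = -1 ∧ w 1 ≠ -1 ∧
      -- `-w ∉ F₁ ∪ F₂`
      (-(w 0) ≠ -1 ∧ -(w 1) ≠ -1)) ∧
    -- it is impossible for every basis element to have second coordinate `±1`
    (∃ i, v i 1 ≠ 1 ∧ v i 1 ≠ -1) :=
  codim_two_star_ewald_general Δ hScoords v hvS hvF1 hbasis
end

section
/- Consider the triangle T ⊂ ℝ² with vertices A = (0,5), B = (0,0), C = (3,0). Let U be the open set of points u ∈ int T that are displaceable by a probe, i.e., there is a facet F of T, a point w ∈ relint F, and a primitive integral vector λ integrally transverse to F, such that u lies on the segment from w in direction λ before exiting T, at affine distance from w strictly less than half the affine length of that segment. Then int T ∖ U contains a nonempty open subset of ℝ². -/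
open Finset

/-- The triangle with vertices `A = (0,5)`, `B = (0,0)`, `C = (3,0)`. -/
def Tset : Set (Fin 2 → ℝ) :=
  convexHull ℝ {![0, 5], ![0, 0], ![3, 0]}

/-- The three edges of the triangle, with their endpoints and primitive outward
integral normals: `AB` has normal `(-1,0)`, `BC` has normal `(0,-1)`, `CA` lies on
`5x + 3y = 15` with normal `(5,3)`. -/
def edgeData : Fin 3 → ((Fin 2 → ℝ) × (Fin 2 → ℝ) × (Fin 2 → ℤ)) :=
  ![(![0, 5], ![0, 0], ![-1, 0]),
    (![0, 0], ![3, 0], ![0, -1]),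
    (![3, 0], ![0, 5], ![5, 3])]

/-- `u` is displaceable by a probe of the triangle `Tset`: there is an edge `F`, a point
`w` in the relative interior of `F` and a primitive integral direction `λ` integrally
transverse to `F` such that `u = w + t·λ` lies on the probe at affine distance `t` from
`w` less than half the affine length of the probe. -/
def DisplaceableByProbe (u : Fin 2 → ℝ) : Prop :=
  ∃ j : Fin 3, ∃ w ∈ openSegment ℝ (edgeData j).1 (edgeData j).2.1,
    ∃ l : Fin 2 → ℤ, IsPrimitiveZ l ∧ |∑ i, l i * (edgeData j).2.2 i| = 1 ∧
      ∃ t : ℝ, 0 < t ∧ u = w + t • (fun i => (l i : ℝ)) ∧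
        2 * t < sSup {s : ℝ | 0 ≤ s ∧ w + s • (fun i => (l i : ℝ)) ∈ Tset}

/-! Take the box of radius `1/50` around `(3/2, 8/5)`. A probe from `AB` (resp. `BC`) entering
the triangle has `λ₀ = 1` (resp. `λ₁ = 1`), so a point `u = w + tλ` on it has `t = u 0`
(resp. `t = u 1`). A probe ends at the latest on the supporting line of any edge towards which
`λ` points, and for `u` in the box `w + 2tλ` already lies on or beyond such a line (that of `CA`,
or that of `BC` when `λ₁ ≤ -2`); so the probe has length at most `2t`. (A probe from `BC` with
`λ₀ < 0` would need `w` beyond `C`.) A probe from `CA` has `⟨λ, (5,3)⟩ = ±1`: with `+1` it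
leaves the triangle, and with `-1` the depth `t = 15 - 5 u 0 - 3 u 1` is incompatible with
`u 0 = w 0 + t λ₀`, `0 ≤ w 0 < 3`, `λ₀ ∈ 1 + 3ℤ`. -/

lemma Tset_eq : Tset = {p | 0 ≤ p 0 ∧ 0 ≤ p 1 ∧ 5 * p 0 + 3 * p 1 ≤ 15} := by
  refine subset_antisymm (convexHull_min ?_ ?_) fun p ⟨hx, hy, hxy⟩ => ?_
  · rintro q (rfl | rfl | rfl) <;> norm_num
  · rintro x ⟨hx0, hx1, hx2⟩ y ⟨hy0, hy1, hy2⟩ a b ha hb hab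
    simp only [Set.mem_ofPred_eq, Pi.add_apply, Pi.smul_apply, smul_eq_mul]
    refine ⟨by positivity, by positivity, by nlinarith⟩
  · -- barycentric coordinates with respect to `A`, `B`, `C`
    let c : Fin 3 → ℝ := ![p 1 / 5, 1 - p 0 / 3 - p 1 / 5, p 0 / 3]
    let z : Fin 3 → Fin 2 → ℝ := ![![0, 5], ![0, 0], ![3, 0]]
    have hp : p = ∑ i, c i • z i := by
      ext i; fin_cases i <;> simp [c, z, Fin.sum_univ_three]
    rw [hp]
    refine (convex_convexHull ℝ _).sum_mem (fun i _ => ?_) ?_ (fun i _ => ?_)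
    · fin_cases i <;> simp [c] <;> linarith
    · simp [c, Fin.sum_univ_three]
    · apply subset_convexHull; fin_cases i <;> simp [z]

theorem sSup_ray_le_of_le_map {E : Type*} [AddCommGroup E] [Module ℝ E] {S : Set E}
    (f : E →ₗ[ℝ] ℝ) {c : ℝ} (hS : ∀ p ∈ S, f p ≤ c) {w v : E} (hv : 0 < f v) {r : ℝ}
    (hr : 0 ≤ r) (hc : c ≤ f (w + r • v)) : sSup {s : ℝ | 0 ≤ s ∧ w + s • v ∈ S} ≤ r := by
  refine Real.sSup_le (fun s ⟨_, hs⟩ => ?_) hr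
  have := (hS _ hs).trans hc
  simp only [map_add, map_smul, smul_eq_mul, add_le_add_iff_left] at this
  exact le_of_mul_le_mul_right this hv

noncomputable def probeLength (w v : Fin 2 → ℝ) : ℝ :=
  sSup {s : ℝ | 0 ≤ s ∧ w + s • v ∈ Tset}

theorem probeLength_le_of_beyond_CA {w v : Fin 2 → ℝ} {r : ℝ} (hv : 0 < 5 * v 0 + 3 * v 1)
    (hr : 0 ≤ r) (hc : 15 ≤ 5 * (w 0 + r * v 0) + 3 * (w 1 + r * v 1)) :
    probeLength w v ≤ r := by
  refine sSup_ray_le_of_le_map ((5 : ℝ) • LinearMap.proj 0 + (3 : ℝ) • LinearMap.proj 1)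
      (c := 15) (fun p hp => ?_) ?_ hr ?_ <;>
    simp only [LinearMap.add_apply, LinearMap.smul_apply, LinearMap.coe_proj, Function.eval,
      Pi.add_apply, Pi.smul_apply, smul_eq_mul]
  · exact (Tset_eq ▸ hp).2.2
  · exact hv
  · exact hc

theorem probeLength_le_of_beyond_BC {w v : Fin 2 → ℝ} {r : ℝ} (hv : v 1 < 0)
    (hr : 0 ≤ r) (hc : w 1 + r * v 1 ≤ 0) : probeLength w v ≤ r := by
  refine sSup_ray_le_of_le_map (-LinearMap.proj 1) (c := 0) (fun p hp => ?_) ?_ hr ?_ <;>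
    simp only [LinearMap.neg_apply, LinearMap.coe_proj, Function.eval, Pi.add_apply,
      Pi.smul_apply, smul_eq_mul, neg_nonpos, neg_pos, Left.nonneg_neg_iff]
  · exact (Tset_eq ▸ hp).2.1
  · exact hv
  · exact hc

theorem probeLength_le_of_mem_edge_AB {u w : Fin 2 → ℝ} {l : Fin 2 → ℤ} {t : ℝ}
    (hw : w ∈ openSegment ℝ ![0, 5] ![0, 0]) (hl : |l 0| = 1) (ht : 0 ≤ t)
    (hut : u = w + t • fun i => (l i : ℝ)) (hu₁ : 15 ≤ 7 * u 0 + 3 * u 1)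
    (hu₂ : u 1 ≤ 2 * u 0) : probeLength w (fun i => l i) ≤ 2 * t := by
  have hw₀ : w 0 = 0 := by
    obtain ⟨a, b, -, -, -, rfl⟩ := hw
    simp
  have hx : u 0 = w 0 + t * l 0 := by simp [hut]
  have hy : u 1 = w 1 + t * l 1 := by simp [hut]
  have hl₀ : (l 0 : ℝ) = 1 := by
    rcases (abs_eq zero_le_one).1 hl with h | h
    · exact_mod_cast h
    · rw [h] at hx; push_cast at hx; linarith
  rcases le_or_gt (-1) (l 1) with hm | hm
  · have hm : (-1 : ℝ) ≤ l 1 := by exact_mod_cast hm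
    apply probeLength_le_of_beyond_CA
    · linarith
    · linarith
    · nlinarith [mul_nonneg ht (neg_le_iff_add_nonneg.1 hm)]
  · have hm : (l 1 : ℝ) ≤ -2 := by exact_mod_cast Int.le_sub_one_of_lt hm
    apply probeLength_le_of_beyond_BC
    · linarith
    · linarith
    · nlinarith [mul_le_mul_of_nonneg_left hm ht]

theorem probeLength_le_of_mem_edge_BC {u w : Fin 2 → ℝ} {l : Fin 2 → ℤ} {t : ℝ}
    (hw : w ∈ openSegment ℝ ![0, 0] ![3, 0]) (hl : |l 1| = 1) (ht : 0 ≤ t)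
    (hut : u = w + t • fun i => (l i : ℝ)) (hu₁ : 0 < u 1) (hu₂ : 3 ≤ u 0 + u 1) :
    probeLength w (fun i => l i) ≤ 2 * t := by
  obtain ⟨hw₀, hw₁⟩ : w 0 < 3 ∧ w 1 = 0 := by
    obtain ⟨a, b, ha, -, hab, rfl⟩ := hw
    simp only [Pi.add_apply, Pi.smul_apply, Matrix.cons_val_zero, Matrix.cons_val_one, smul_eq_mul]
    constructor <;> linarith
  have hx : u 0 = w 0 + t * l 0 := by simp [hut]
  have hy : u 1 = w 1 + t * l 1 := by simp [hut]
  have hl₁ : (l 1 : ℝ) = 1 := by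
    rcases (abs_eq zero_le_one).1 hl with h | h
    · exact_mod_cast h
    · rw [h] at hy; push_cast at hy; linarith
  rcases le_or_gt 0 (l 0) with hm | hm
  · have hm : (0 : ℝ) ≤ l 0 := by exact_mod_cast hm
    apply probeLength_le_of_beyond_CA
    · linarith
    · linarith
    · nlinarith [mul_nonneg ht hm]
  · have hm : (l 0 : ℝ) ≤ -1 := by exact_mod_cast Int.le_sub_one_of_lt hm
    nlinarith [mul_le_mul_of_nonneg_left hm ht]

theorem ne_add_smul_of_mem_edge_CA {u w : Fin 2 → ℝ} {l : Fin 2 → ℤ} {t : ℝ}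
    (hw : w ∈ openSegment ℝ ![3, 0] ![0, 5]) (hl : |l 0 * 5 + l 1 * 3| = 1) (ht : 0 ≤ t)
    (hu₀ : 0 ≤ u 0) (hu₁ : 2 * u 0 + u 1 < 5) (hu₂ : 3 * u 0 + 2 * u 1 ≤ 9) :
    u ≠ w + t • fun i => (l i : ℝ) := by
  intro hut
  obtain ⟨hw₀, hw₀', hw₁⟩ : 0 ≤ w 0 ∧ w 0 < 3 ∧ 5 * w 0 + 3 * w 1 = 15 := by
    obtain ⟨a, b, ha, hb, hab, rfl⟩ := hw
    simp only [Pi.add_apply, Pi.smul_apply, Matrix.cons_val_zero, Matrix.cons_val_one, smul_eq_mul]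
    exact ⟨by linarith, by linarith, by linear_combination 15 * hab⟩
  have hx : u 0 = w 0 + t * l 0 := by simp [hut]
  have hy : u 1 = w 1 + t * l 1 := by simp [hut]
  rcases (abs_eq zero_le_one).1 hl with h | h
  · have hσ : (l 0 : ℝ) * 5 + l 1 * 3 = 1 := by exact_mod_cast h
    nlinarith
  · have hσ : (l 0 : ℝ) * 5 + l 1 * 3 = -1 := by exact_mod_cast h
    -- `5 * l 0 ≡ -1 [ZMOD 3]` rules out `l 0 ∈ {-1, 0}`
    rcases (by omega : 1 ≤ l 0 ∨ l 0 ≤ -2) with hm | hm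
    · have hm : (1 : ℝ) ≤ l 0 := by exact_mod_cast hm
      nlinarith [mul_le_mul_of_nonneg_left hm ht]
    · have hm : (l 0 : ℝ) ≤ -2 := by exact_mod_cast hm
      nlinarith [mul_le_mul_of_nonneg_left hm ht]

/-- the set of points of the triangle `ABC` not displaceable by probes
contains a nonempty open set. -/
theorem open_set_of_nondisplaceable_points :
    ∃ U : Set (Fin 2 → ℝ), IsOpen U ∧ U.Nonempty ∧ U ⊆ interior Tset ∧
      ∀ u ∈ U, ¬ DisplaceableByProbe u := by
  have hU : ∀ u ∈ Metric.ball (![3 / 2, 8 / 5] : Fin 2 → ℝ) (1 / 50),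
      |u 0 - 3 / 2| < 1 / 50 ∧ |u 1 - 8 / 5| < 1 / 50 := fun u hu => by
    rw [Metric.mem_ball, dist_pi_lt_iff (by norm_num)] at hu
    simpa [Fin.forall_fin_two, Real.dist_eq] using hu
  refine ⟨Metric.ball ![3 / 2, 8 / 5] (1 / 50), Metric.isOpen_ball,
    Metric.nonempty_ball.2 (by norm_num), interior_maximal (fun u hu => ?_) Metric.isOpen_ball,
    fun u hu => ?_⟩
  all_goals obtain ⟨hx, hy⟩ := hU u hu; rw [abs_sub_lt_iff] at hx hy
  · rw [Tset_eq]
    exact ⟨by linarith, by linarith, by linarith⟩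
  rintro ⟨j, w, hw, l, -, hl, t, ht, hut, hlen⟩
  fin_cases j <;>
    simp only [edgeData, Fin.zero_eta, Fin.mk_one, Fin.reduceFinMk, Fin.isValue, Matrix.cons_val,
      Matrix.cons_val_zero, Matrix.cons_val_one, Matrix.cons_val_fin_one, Fin.sum_univ_two,
      Int.reduceNeg, mul_neg, mul_one, mul_zero, add_zero, zero_add, abs_neg] at hw hl
  · exact hlen.not_ge (probeLength_le_of_mem_edge_AB hw hl ht.le hut (by linarith) (by linarith))
  · exact hlen.not_ge (probeLength_le_of_mem_edge_BC hw hl ht.le hut (by linarith) (by linarith))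
  · exact ne_add_smul_of_mem_edge_CA hw hl ht.le (by linarith) (by linarith) (by linarith) hut
end

section
/- Let Δ ⊂ ℝ³ be a monotone polytope with interior lattice point 0 and let F be a small facet of Δ, i.e. a triangular facet all of whose edges have affine length 1. Choose coordinates so the vertices of F are (−1,−1,−1), (−1,0,−1), (−1,−1,0) and F ⊂ {x₁ = −1}. Then the vertex-Fano condition forces: the primitive edge vector of Δ at (−1,0,−1) transverse to F is (1,2,0), and at (−1,−1,0) it is (1,0,2); hence Δ contains the points (0,−1,−1), (0,2,−1), (0,−1,2). -/
/-!
At a vertex `v` of the small facet, the Fano condition `v + e₁ + e₂ + e₃ = 0` makes the first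
coordinates of the three primitive edge vectors nonnegative integers with sum `1`. Two edges
therefore lie in the facet and are the sides of the triangle, and the third is `-v` minus the
sides: `(1,0,0)`, `(1,2,0)` and `(1,0,2)`, whose lattice endpoints are the three points.

For another transverse edge `a` at `v`, write `a = c f₃ + c₁ f₁ + c₂ f₂` in the frame of the Fano
edges `f₁, f₂` (in the facet) and `f₃`. If `c₁, c₂` have the same sign, the edge at `v` spanned by
`a` or by `f₃` is split by directions pointing into `Δ`, which forces `a ∥ f₃`. If they have
opposite signs, a suitable convex combination of `v + a` with points of the slice `x₀ = 0` shows
that a lattice point on the boundary of the triangle `(0,-1,-1), (0,2,-1), (0,-1,2)` is interior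
to `Δ`, contradicting uniqueness of the interior lattice point.
-/

open Finset

section Lattice

variable {n : ℕ} {x y e f : Fin n → ℝ}

theorem IsPrimitiveZ.exists_sum_mul_eq_one {a : Fin n → ℤ} (ha : IsPrimitiveZ a) :
    ∃ c : Fin n → ℤ, ∑ i, c i * a i = 1 := by
  obtain ⟨g, hg⟩ := (inferInstance : (Ideal.span (Set.range a)).IsPrincipal)
  have hdvd : ∀ i, g ∣ a i := fun i => by
    have hi : a i ∈ Ideal.span (Set.range a) := Ideal.subset_span (Set.mem_range_self i)
    rwa [hg, ← Ideal.span, Ideal.mem_span_singleton] at hi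
  have htop : Ideal.span (Set.range a) = ⊤ :=
    hg.trans (Ideal.span_singleton_eq_top.2 (ha.2 g hdvd))
  have h1 : (1 : ℤ) ∈ Submodule.span ℤ (Set.range a) := by
    rw [← Ideal.span, htop]; exact Submodule.mem_top
  simpa using (Submodule.mem_span_range_iff_exists_fun ℤ).1 h1

theorem IsPrimitiveZ.of_isUnit {a : Fin n → ℤ} {i : Fin n} (hi : IsUnit (a i)) :
    IsPrimitiveZ a :=
  ⟨fun h => by simp [h] at hi, fun _ hd => isUnit_of_dvd_unit (hd i) hi⟩

theorem IsLatticePt.sub (hx : IsLatticePt x) (hy : IsLatticePt y) : IsLatticePt (x - y) :=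
  fun i => by
    obtain ⟨a, ha⟩ := hx i
    obtain ⟨b, hb⟩ := hy i
    exact ⟨a - b, by simp [ha, hb]⟩

theorem IsLatticePt.one_le_of_pos (hx : IsLatticePt x) {i : Fin n} (h : 0 < x i) : 1 ≤ x i := by
  obtain ⟨z, hz⟩ := hx i
  rw [hz] at h ⊢
  exact_mod_cast (Int.cast_pos.1 h : 0 < z)

theorem IsPrimIntVec.isLatticePt (he : IsPrimIntVec e) : IsLatticePt e := by
  obtain ⟨a, -, rfl⟩ := he
  exact fun i => ⟨a i, rfl⟩

theorem IsPrimIntVec.ne_zero (he : IsPrimIntVec e) : e ≠ 0 := by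
  obtain ⟨a, ha, rfl⟩ := he
  exact fun h => ha.1 (funext fun i => by simpa using congrFun h i)

theorem IsPrimIntVec.one_le_of_isLatticePt_smul (he : IsPrimIntVec e) {t : ℝ} (ht : 0 < t)
    (h : IsLatticePt (t • e)) : 1 ≤ t := by
  obtain ⟨a, ha, rfl⟩ := he
  obtain ⟨c, hc⟩ := ha.exists_sum_mul_eq_one
  choose z hz using h
  have ht' : t = ((∑ i, c i * z i : ℤ) : ℝ) := by
    calc t = t * ((∑ i, c i * a i : ℤ) : ℝ) := by rw [hc]; simp
      _ = ∑ i, (c i : ℝ) * (t * a i) := by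
          push_cast; rw [Finset.mul_sum]; exact Finset.sum_congr rfl fun i _ => by ring
      _ = _ := by push_cast; exact Finset.sum_congr rfl fun i _ => by rw [← hz i]; rfl
  rw [ht'] at ht ⊢
  exact_mod_cast (Int.cast_pos.1 ht : (0 : ℤ) < ∑ i, c i * z i)

theorem IsPrimIntVec.eq_of_eq_smul (he : IsPrimIntVec e) (hf : IsPrimIntVec f) {r : ℝ}
    (hr : 0 ≤ r) (h : e = r • f) : e = f := by
  have hr0 : 0 < r := hr.lt_of_ne <| by rintro rfl; exact he.ne_zero (by simpa using h)
  have h1 : 1 ≤ r := hf.one_le_of_isLatticePt_smul hr0 (h ▸ he.isLatticePt)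
  have h2 : 1 ≤ r⁻¹ := he.one_le_of_isLatticePt_smul (inv_pos.2 hr0) <| by
    rw [h, smul_smul, inv_mul_cancel₀ hr0.ne', one_smul]; exact hf.isLatticePt
  rw [h, le_antisymm ((one_le_inv₀ hr0).1 h2) h1, one_smul]

theorem isLatticePt_vec3 (a b c : ℤ) : IsLatticePt ![(a : ℝ), b, c] := by
  intro i; fin_cases i <;> exact ⟨_, rfl⟩

theorem isPrimIntVec_vec3 (a b c : ℤ) (h : IsUnit a ∨ IsUnit b ∨ IsUnit c) :
    IsPrimIntVec ![(a : ℝ), b, c] := by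
  refine ⟨![a, b, c], ?_, by ext i; fin_cases i <;> rfl⟩
  rcases h with h | h | h
  exacts [.of_isUnit (i := 0) h, .of_isUnit (i := 1) h, .of_isUnit (i := 2) h]

end Lattice

section Convex

variable {E : Type*} [AddCommGroup E] [Module ℝ E] {Δ : Set E} {v x y u w e z : E}

theorem right_mem_extremePoints_segment (x y : E) : y ∈ (segment ℝ x y).extremePoints ℝ := by
  refine mem_extremePoints.2 ⟨right_mem_segment ℝ x y, fun x₁ hx₁ x₂ hx₂ hy => ?_⟩
  rw [segment_eq_image'] at hx₁ hx₂
  obtain ⟨θ₁, ⟨-, hθ₁⟩, rfl⟩ := hx₁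
  obtain ⟨θ₂, ⟨-, hθ₂⟩, rfl⟩ := hx₂
  obtain ⟨a, b, ha, hb, hab, hxy⟩ := hy
  have key : (a * θ₁ + b * θ₂ - 1) • (y - x) = 0 := by
    linear_combination (norm := module) hxy - hab • x
  rcases smul_eq_zero.1 key with h | h
  · have h₁ : θ₁ = 1 := by nlinarith
    have h₂ : θ₂ = 1 := by nlinarith
    simp [h₁, h₂]
  · rw [sub_eq_zero] at h
    simp [h]

theorem add_smul_mem_segment {s t : ℝ} (hs : 0 ≤ s) (hst : s ≤ t) :
    v + s • e ∈ segment ℝ v (v + t • e) := by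
  rw [segment_eq_image']
  refine ⟨s / t, ⟨div_nonneg hs (hs.trans hst), div_le_one_of_le₀ hst (hs.trans hst)⟩, ?_⟩
  dsimp only
  rw [add_sub_cancel_left, smul_smul, div_mul_cancel_of_imp (fun ht => by linarith)]

theorem exists_eq_add_smul_of_mem_segment {t : ℝ} (ht : 0 ≤ t)
    (h : x ∈ segment ℝ v (v + t • e)) : ∃ s : ℝ, 0 ≤ s ∧ x = v + s • e := by
  rw [segment_eq_image'] at h
  obtain ⟨θ, ⟨hθ, -⟩, rfl⟩ := h
  exact ⟨θ * t, mul_nonneg hθ ht, by simp only [add_sub_cancel_left, smul_smul]⟩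

theorem exists_eq_add_smul_add_smul_of_mem_convexHull {f₁ f₂ : E}
    (h : x ∈ convexHull ℝ {v, v + f₁, v + f₂}) :
    ∃ a b : ℝ, 0 ≤ a ∧ 0 ≤ b ∧ x = v + a • f₁ + b • f₂ := by
  rw [convexHull_insert (Set.insert_nonempty _ _), convexHull_pair, mem_convexJoin] at h
  obtain ⟨_, rfl, y, hy, hx⟩ := h
  rw [segment_eq_image] at hy
  obtain ⟨θ, ⟨hθ₀, hθ₁⟩, rfl⟩ := hy
  rw [segment_eq_image'] at hx
  obtain ⟨μ, ⟨hμ₀, -⟩, rfl⟩ := hx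
  exact ⟨μ * (1 - θ), μ * θ, by nlinarith, by nlinarith, by module⟩

theorem Convex.add_smul_mem_of_le (hΔ : Convex ℝ Δ) (hv : v ∈ Δ) {ε δ : ℝ} (hε : 0 < ε)
    (hu : v + ε • u ∈ Δ) (hδ : 0 ≤ δ) (hδε : δ ≤ ε) : v + δ • u ∈ Δ := by
  have := hΔ.add_smul_mem hv hu ⟨div_nonneg hδ hε.le, (div_le_one hε).2 hδε⟩
  rwa [smul_smul, div_mul_cancel₀ _ hε.ne'] at this

def feasibleCone (Δ : Set E) (v : E) : Set E := {u | ∃ ε : ℝ, 0 < ε ∧ v + ε • u ∈ Δ}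

theorem mem_feasibleCone_of_add_mem (h : v + u ∈ Δ) : u ∈ feasibleCone Δ v :=
  ⟨1, one_pos, by rwa [one_smul]⟩

theorem smul_mem_feasibleCone (hv : v ∈ Δ) (hu : u ∈ feasibleCone Δ v) {c : ℝ} (hc : 0 ≤ c) :
    c • u ∈ feasibleCone Δ v := by
  obtain ⟨ε, hε, h⟩ := hu
  rcases hc.eq_or_lt with rfl | hc
  · exact ⟨1, one_pos, by simpa using hv⟩
  · exact ⟨ε / c, div_pos hε hc, by rwa [smul_smul, div_mul_cancel₀ _ hc.ne']⟩

theorem add_mem_feasibleCone (hΔ : Convex ℝ Δ) (hv : v ∈ Δ) (hu : u ∈ feasibleCone Δ v)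
    (hw : w ∈ feasibleCone Δ v) : u + w ∈ feasibleCone Δ v := by
  obtain ⟨ε, hε, hu⟩ := hu
  obtain ⟨δ, hδ, hw⟩ := hw
  have hη : 0 < min ε δ := lt_min hε hδ
  have h₁ := hΔ.add_smul_mem_of_le hv hε hu hη.le (min_le_left _ _)
  have h₂ := hΔ.add_smul_mem_of_le hv hδ hw hη.le (min_le_right _ _)
  refine ⟨min ε δ / 2, by positivity, ?_⟩
  convert hΔ h₁ h₂ (by norm_num : (0 : ℝ) ≤ 1 / 2) (by norm_num : (0 : ℝ) ≤ 1 / 2) (by norm_num)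
    using 1
  module

theorem Convex.mem_interior_of_one_lt_smul_mem [TopologicalSpace E] [IsTopologicalAddGroup E]
    [ContinuousSMul ℝ E] (hΔ : Convex ℝ Δ) (h0 : 0 ∈ interior Δ) {c : ℝ} (hc : 1 < c)
    (h : c • z ∈ Δ) : z ∈ interior Δ := by
  have hc₀ : 0 < c := one_pos.trans hc
  have := hΔ.combo_interior_self_mem_interior h0 h (sub_pos.2 (inv_lt_one_of_one_lt₀ hc))
    (inv_nonneg.2 hc₀.le) (sub_add_cancel 1 c⁻¹)
  rwa [smul_zero, zero_add, smul_smul, inv_mul_cancel₀ hc₀.ne', one_smul] at this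

end Convex

section Edges

variable {n : ℕ} {Δ : Set (Fin n → ℝ)} {v e x y a f₁ f₂ f₃ : Fin n → ℝ}

theorem IsEdgeDir.left_mem (he : IsEdgeDir Δ v e) : v ∈ Δ :=
  let ⟨_, _, hS⟩ := he
  hS.1 (left_mem_segment ℝ _ _)

theorem IsEdgeDir.mem_feasibleCone (he : IsEdgeDir Δ v e) : e ∈ feasibleCone Δ v :=
  let ⟨t, ht, hS⟩ := he
  ⟨t, ht, hS.1 (right_mem_segment ℝ _ _)⟩

theorem IsEdgeDir.nonneg_apply (he : IsEdgeDir Δ v e) {i : Fin n} (h : ∀ x ∈ Δ, v i ≤ x i) :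
    0 ≤ e i := by
  obtain ⟨t, ht, hx⟩ := he.mem_feasibleCone
  have := h _ hx
  simp only [Pi.add_apply, Pi.smul_apply, smul_eq_mul, le_add_iff_nonneg_right] at this
  exact (mul_nonneg_iff_of_pos_left ht).1 this

theorem IsEdgeDir.one_le_apply (hedge : IsEdgeDir Δ v e) (he : IsPrimIntVec e) {i : Fin n}
    (h : ∀ x ∈ Δ, v i ≤ x i) (hi : e i ≠ 0) : 1 ≤ e i :=
  he.isLatticePt.one_le_of_pos ((hedge.nonneg_apply h).lt_of_ne hi.symm)

theorem IsEdgeDir.exists_eq_smul (hΔ : Convex ℝ Δ) (he : IsEdgeDir Δ v e)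
    (hx : x ∈ feasibleCone Δ v) (hy : y ∈ feasibleCone Δ v) {c : ℝ} (hc : 0 ≤ c)
    (hxy : x + y = c • e) : ∃ r : ℝ, 0 ≤ r ∧ x = r • e := by
  obtain ⟨t, ht, hS⟩ := he
  have hv : v ∈ Δ := hS.1 (left_mem_segment ℝ _ _)
  obtain ⟨ε, hε, hx⟩ := hx
  obtain ⟨δ, hδ, hy⟩ := hy
  set η := min (min ε δ) (t / (c + 1))
  have hη : 0 < η := lt_min (lt_min hε hδ) (by positivity)
  have hηt : η * (c + 1) ≤ t := (le_div_iff₀ (by positivity)).1 (min_le_right _ _)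
  have hX := hΔ.add_smul_mem_of_le hv hε hx hη.le ((min_le_left _ _).trans (min_le_left _ _))
  have hY := hΔ.add_smul_mem_of_le hv hδ hy hη.le ((min_le_left _ _).trans (min_le_right _ _))
  have hmid : v + (η * c / 2) • e ∈ segment ℝ v (v + t • e) :=
    add_smul_mem_segment (by positivity) (by nlinarith)
  -- the midpoint of `v + η • x` and `v + η • y` lies on the edge, hence so do both points
  have hopen : v + (η * c / 2) • e ∈ openSegment ℝ (v + η • x) (v + η • y) :=
    ⟨1 / 2, 1 / 2, by norm_num, by norm_num, by norm_num,
      by linear_combination (norm := module) (η / 2) • hxy⟩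
  obtain ⟨s, hs, hXs⟩ := exists_eq_add_smul_of_mem_segment ht.le (hS.2 hX hY hmid hopen)
  refine ⟨s / η, div_nonneg hs hη.le, ?_⟩
  rw [div_eq_inv_mul, mul_smul, ← add_left_cancel hXs, smul_smul, inv_mul_cancel₀ hη.ne',
    one_smul]

theorem IsEdgeDir.add_mem_convexHull {V : Set (Fin n → ℝ)} (hV : ∀ w ∈ V, IsLatticePt w)
    (hv : IsLatticePt v) (he : IsPrimIntVec e) (hedge : IsEdgeDir (convexHull ℝ V) v e) :
    v + e ∈ convexHull ℝ V := by
  obtain ⟨t, ht, hS⟩ := hedge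
  have hend : v + t • e ∈ V := extremePoints_convexHull_subset
    (hS.extremePoints_subset_extremePoints (right_mem_extremePoints_segment _ _))
  have h1 : 1 ≤ t := he.one_le_of_isLatticePt_smul ht (by simpa using (hV _ hend).sub hv)
  simpa using hS.1 (add_smul_mem_segment zero_le_one h1)

theorem IsEdgeDir.eq_or_eq_of_facet (hΔ : Convex ℝ Δ) {i : Fin n} {b : ℝ}
    (hF : Δ ∩ {x | x i = b} = convexHull ℝ {v, v + f₁, v + f₂}) (he : IsPrimIntVec e)
    (hf₁ : IsPrimIntVec f₁) (hf₂ : IsPrimIntVec f₂) (hedge : IsEdgeDir Δ v e) (he0 : e i = 0) :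
    e = f₁ ∨ e = f₂ := by
  have hmem : ∀ x ∈ ({v, v + f₁, v + f₂} : Set _), x ∈ Δ ∧ x i = b := fun x hx =>
    (hF.symm ▸ subset_convexHull ℝ _ hx : x ∈ Δ ∩ {x | x i = b})
  have hv := hmem v (by simp)
  have hK₁ := mem_feasibleCone_of_add_mem (hmem (v + f₁) (by simp)).1
  have hK₂ := mem_feasibleCone_of_add_mem (hmem (v + f₂) (by simp)).1
  obtain ⟨t, ht, hend⟩ := hedge.mem_feasibleCone
  have hendF : v + t • e ∈ convexHull ℝ {v, v + f₁, v + f₂} := hF ▸ ⟨hend, by simp [hv.2, he0]⟩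
  obtain ⟨c₁, c₂, hc₁, hc₂, hc⟩ := exists_eq_add_smul_add_smul_of_mem_convexHull hendF
  obtain ⟨r, hr, hr'⟩ := hedge.exists_eq_smul hΔ (smul_mem_feasibleCone hv.1 hK₁ hc₁)
    (smul_mem_feasibleCone hv.1 hK₂ hc₂) ht.le (by linear_combination (norm := module) -hc)
  by_cases h : c₁ = 0
  · right
    rw [h, zero_smul, add_zero] at hc
    refine he.eq_of_eq_smul hf₂ (div_nonneg hc₂ ht.le) ?_
    rw [div_eq_inv_mul, mul_smul, ← add_left_cancel hc, smul_smul, inv_mul_cancel₀ ht.ne',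
      one_smul]
  · left
    have hr0 : r ≠ 0 := by
      rintro rfl
      exact hf₁.ne_zero ((smul_eq_zero.1 (hr'.trans (zero_smul _ e))).resolve_left h)
    refine he.eq_of_eq_smul hf₁ (div_nonneg hc₁ hr) ?_
    rw [div_eq_inv_mul, mul_smul, hr', smul_smul, inv_mul_cancel₀ hr0, one_smul]

end Edges

section Frame

variable {n : ℕ} {Δ : Set (Fin n → ℝ)} {v a f₁ f₂ f₃ : Fin n → ℝ} {c c₁ c₂ : ℝ}

theorem mem_interior_of_frame (hΔ : Convex ℝ Δ) (h0 : 0 ∈ interior Δ)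
    (hframe : v + f₁ + f₂ + f₃ = 0) (hv : v ∈ Δ) (h₃ : v + f₃ ∈ Δ)
    (h₃₁ : v + f₃ + (3 : ℝ) • f₁ ∈ Δ) (ha : v + (c • f₃ + c₁ • f₁ + c₂ • f₂) ∈ Δ) (hc : 1 ≤ c)
    (hc₁ : 0 ≤ c₁) (hc₂ : c₂ < 0) : v + f₃ + f₁ ∈ interior Δ := by
  have hN : 0 < 3 * c + c₁ := by positivity
  -- this center of mass is `(3c + c₁)⁻¹ (3c + c₁ - c₂) • (v + f₃ + f₁)`, beyond `v + f₃ + f₁`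
  -- on the ray from the interior point `0`
  have hy := hΔ.centerMass_mem (t := Finset.univ) (w := ![c - 1, 1, c, c₁ + c])
    (z := ![v, v + (c • f₃ + c₁ • f₁ + c₂ • f₂), v + f₃ + (3 : ℝ) • f₁, v + f₃])
    (fun i _ => by fin_cases i <;> simp <;> linarith)
    (by simp [Fin.sum_univ_four]; linarith)
    (fun i _ => by fin_cases i <;> assumption)
  refine hΔ.mem_interior_of_one_lt_smul_mem h0 (c := (3 * c + c₁)⁻¹ * (3 * c + c₁ - c₂))
    (by rw [lt_inv_mul_iff₀ hN]; linarith) ?_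
  convert hy using 1
  simp only [Finset.centerMass, Fin.sum_univ_four, Matrix.cons_val]
  rw [show c - 1 + 1 + c + (c₁ + c) = 3 * c + c₁ by ring, mul_smul]
  congr 1
  linear_combination (norm := module) (-c₂) • hframe

/-- If `c₁, c₂` have the same sign, one of the edges `a` and `f₃` splits into feasible directions
along the other; opposite signs are excluded by `mem_interior_of_frame`. -/
theorem IsEdgeDir.eq_of_frame (hΔ : Convex ℝ Δ) (h0 : 0 ∈ interior Δ)
    (hframe : v + f₁ + f₂ + f₃ = 0) (h₁ : v + f₁ ∈ Δ) (h₂ : v + f₂ ∈ Δ) (h₃ : v + f₃ ∈ Δ)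
    (h₃₁ : v + f₃ + (3 : ℝ) • f₁ ∈ Δ) (h₃₂ : v + f₃ + (3 : ℝ) • f₂ ∈ Δ)
    (hz₁ : v + f₃ + f₁ ∉ interior Δ) (hz₂ : v + f₃ + f₂ ∉ interior Δ)
    (hedge : IsEdgeDir Δ v a) (ha : IsPrimIntVec a) (hva : v + a ∈ Δ)
    (hedge₃ : IsEdgeDir Δ v f₃) (hf₃ : IsPrimIntVec f₃) (hc : 1 ≤ c)
    (hdecomp : a = c • f₃ + c₁ • f₁ + c₂ • f₂) : a = f₃ := by
  have hv := hedge.left_mem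
  have hK₁ := mem_feasibleCone_of_add_mem h₁
  have hK₂ := mem_feasibleCone_of_add_mem h₂
  rcases le_or_gt 0 c₁ with hc₁ | hc₁ <;> rcases le_or_gt 0 c₂ with hc₂ | hc₂
  · obtain ⟨r, hr, hr'⟩ := hedge.exists_eq_smul hΔ
      (smul_mem_feasibleCone hv hedge₃.mem_feasibleCone (zero_le_one.trans hc))
      (add_mem_feasibleCone hΔ hv (smul_mem_feasibleCone hv hK₁ hc₁)
        (smul_mem_feasibleCone hv hK₂ hc₂)) zero_le_one (by rw [hdecomp, one_smul, add_assoc])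
    refine (hf₃.eq_of_eq_smul ha (div_nonneg hr (zero_le_one.trans hc)) ?_).symm
    rw [div_eq_inv_mul, mul_smul, ← hr', smul_smul, inv_mul_cancel₀ (by positivity), one_smul]
  · exact absurd (mem_interior_of_frame hΔ h0 hframe hv h₃ h₃₁ (hdecomp ▸ hva) hc hc₁ hc₂) hz₁
  · refine absurd (mem_interior_of_frame hΔ h0 (by rw [← hframe]; abel) hv h₃ h₃₂
      (f₁ := f₂) (f₂ := f₁) (c₁ := c₂) (c₂ := c₁) ?_ hc hc₂ hc₁) hz₂
    convert hva using 2
    rw [hdecomp]; abel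
  · obtain ⟨r, hr, hr'⟩ := hedge₃.exists_eq_smul hΔ hedge.mem_feasibleCone
      (add_mem_feasibleCone hΔ hv (smul_mem_feasibleCone hv hK₁ (neg_nonneg.2 hc₁.le))
        (smul_mem_feasibleCone hv hK₂ (neg_nonneg.2 hc₂.le))) (zero_le_one.trans hc)
      (by rw [hdecomp]; module)
    exact ha.eq_of_eq_smul hf₃ hr hr'

end Frame

section Facet

variable {Δ : Set (Fin 3 → ℝ)} {v f₁ f₂ : Fin 3 → ℝ}

/-- The three Fano edges at `v` have nonnegative integral first coordinates summing to
`-v₀ = 1`, so two of them lie in the facet, where they must be `f₁` and `f₂`. -/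
theorem isEdgeDir_neg_of_facet (hΔ : Convex ℝ Δ) (hhalf : ∀ x ∈ Δ, -1 ≤ x 0)
    (hF : Δ ∩ {x | x 0 = -1} = convexHull ℝ {v, v + f₁, v + f₂})
    (hf₁ : IsPrimIntVec f₁) (hf₂ : IsPrimIntVec f₂) (hfano : VertexFanoSmoothAt Δ 0 v) :
    IsEdgeDir Δ v (-(v + f₁ + f₂)) := by
  obtain ⟨e, hinj, he, -, hsum⟩ := hfano
  have hv0 : v 0 = -1 :=
    (hF.symm ▸ subset_convexHull ℝ _ (Set.mem_insert v _) : v ∈ Δ ∩ {x | x 0 = -1}).2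
  have hsum' : e 0 + e 1 + e 2 = -v := by
    rw [← Fin.sum_univ_three]; exact eq_neg_of_add_eq_zero_right hsum
  have key : ∀ i j k : Fin 3, i ≠ j → e i + e j + e k = -v → e i 0 = 0 → e j 0 = 0 →
      IsEdgeDir Δ v (-(v + f₁ + f₂)) := by
    intro i j k hij hijk hi hj
    have hflat : ∀ l, e l 0 = 0 → e l = f₁ ∨ e l = f₂ := fun l hl =>
      (he l).2.eq_or_eq_of_facet hΔ hF (he l).1 hf₁ hf₂ hl
    have hpair : e i + e j = f₁ + f₂ := by
      rcases hflat i hi with h₁ | h₁ <;> rcases hflat j hj with h₂ | h₂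
      · exact absurd (hinj (h₁.trans h₂.symm)) hij
      · rw [h₁, h₂]
      · rw [h₁, h₂, add_comm]
      · exact absurd (hinj (h₁.trans h₂.symm)) hij
    have hk : e k = -(v + f₁ + f₂) := by
      linear_combination (norm := module) hijk - hpair
    exact hk ▸ (he k).2
  have hnonneg : ∀ i, 0 ≤ e i 0 := fun i =>
    (he i).2.nonneg_apply fun x hx => hv0 ▸ hhalf x hx
  obtain ⟨z₀, hz₀⟩ := (he 0).1.isLatticePt 0
  obtain ⟨z₁, hz₁⟩ := (he 1).1.isLatticePt 0
  obtain ⟨z₂, hz₂⟩ := (he 2).1.isLatticePt 0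
  have hz : z₀ + z₁ + z₂ = 1 := by
    have := congrFun hsum' 0
    simp only [Pi.add_apply, Pi.neg_apply, hv0, hz₀, hz₁, hz₂] at this
    exact_mod_cast this
  have h₀ : 0 ≤ z₀ := by exact_mod_cast hz₀ ▸ hnonneg 0
  have h₁ : 0 ≤ z₁ := by exact_mod_cast hz₁ ▸ hnonneg 1
  have h₂ : 0 ≤ z₂ := by exact_mod_cast hz₂ ▸ hnonneg 2
  have : (z₀ = 0 ∧ z₁ = 0) ∨ (z₀ = 0 ∧ z₂ = 0) ∨ (z₁ = 0 ∧ z₂ = 0) := by omega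
  rcases this with ⟨hi, hj⟩ | ⟨hi, hj⟩ | ⟨hi, hj⟩
  · exact key 0 1 2 (by decide) hsum' (by simp [hz₀, hi]) (by simp [hz₁, hj])
  · exact key 0 2 1 (by decide) (by rw [← hsum']; abel) (by simp [hz₀, hi]) (by simp [hz₂, hj])
  · exact key 1 2 0 (by decide) (by rw [← hsum']; abel) (by simp [hz₁, hi]) (by simp [hz₂, hj])

end Facet

section SmallFacet

variable {Δ : Set (Fin 3 → ℝ)}

theorem isEdgeDir_transverse_of_smallFacet (hΔ : Convex ℝ Δ) (hhalf : ∀ x ∈ Δ, -1 ≤ x 0)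
    (hF : Δ ∩ {x | x 0 = -1} = convexHull ℝ {![-1, -1, -1], ![-1, 0, -1], ![-1, -1, 0]})
    (hfano₁ : VertexFanoSmoothAt Δ 0 ![-1, -1, -1]) (hfano₂ : VertexFanoSmoothAt Δ 0 ![-1, 0, -1])
    (hfano₃ : VertexFanoSmoothAt Δ 0 ![-1, -1, 0]) :
    IsEdgeDir Δ ![-1, -1, -1] ![1, 0, 0] ∧ IsEdgeDir Δ ![-1, 0, -1] ![1, 2, 0] ∧
      IsEdgeDir Δ ![-1, -1, 0] ![1, 0, 2] := by
  refine ⟨?_, ?_, ?_⟩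
  · have hF₁ : Δ ∩ {x | x 0 = -1} = convexHull ℝ
        {![-1, -1, -1], ![-1, -1, -1] + ![0, 1, 0], ![-1, -1, -1] + ![0, 0, 1]} := by
      rw [hF]; norm_num
    convert isEdgeDir_neg_of_facet hΔ hhalf hF₁
      (by simpa using isPrimIntVec_vec3 0 1 0 (by simp))
      (by simpa using isPrimIntVec_vec3 0 0 1 (by simp)) hfano₁ using 1
    norm_num
  · have hF₂ : Δ ∩ {x | x 0 = -1} = convexHull ℝ
        {![-1, 0, -1], ![-1, 0, -1] + ![0, -1, 0], ![-1, 0, -1] + ![0, -1, 1]} := by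
      rw [hF]; norm_num [Set.insert_comm]
    convert isEdgeDir_neg_of_facet hΔ hhalf hF₂
      (by simpa using isPrimIntVec_vec3 0 (-1) 0 (by simp))
      (by simpa using isPrimIntVec_vec3 0 (-1) 1 (by simp)) hfano₂ using 1
    norm_num
  · have hF₃ : Δ ∩ {x | x 0 = -1} = convexHull ℝ
        {![-1, -1, 0], ![-1, -1, 0] + ![0, 0, -1], ![-1, -1, 0] + ![0, 1, -1]} := by
      rw [hF]; norm_num [Set.insert_comm, Set.pair_comm]
    convert isEdgeDir_neg_of_facet hΔ hhalf hF₃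
      (by simpa using isPrimIntVec_vec3 0 0 (-1) (by simp))
      (by simpa using isPrimIntVec_vec3 0 1 (-1) (by simp)) hfano₃ using 1
    norm_num

theorem notMem_interior_vec3 (huniq : ∀ w, IsLatticePt w → w ∈ interior Δ → w = 0)
    (a b c : ℤ) (h : a ≠ 0 ∨ b ≠ 0 ∨ c ≠ 0) : ![(a : ℝ), b, c] ∉ interior Δ := fun hint => by
  have := huniq _ (isLatticePt_vec3 a b c) hint
  rcases h with h | h | h
  exacts [h (by simpa using congrFun this 0), h (by simpa using congrFun this 1),
    h (by simpa using congrFun this 2)]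

theorem eq_of_isEdgeDir_of_smallFacet₂ (hΔ : Convex ℝ Δ) (h0 : 0 ∈ interior Δ)
    (huniq : ∀ w, IsLatticePt w → w ∈ interior Δ → w = 0) (hhalf : ∀ x ∈ Δ, -1 ≤ x 0)
    (hp₁ : ![-1, -1, -1] ∈ Δ) (hp₃ : ![-1, -1, 0] ∈ Δ) (hA : ![0, -1, -1] ∈ Δ)
    (hT : ![0, 2, -1] ∈ Δ) (hB : ![0, -1, 2] ∈ Δ) (hT₂ : IsEdgeDir Δ ![-1, 0, -1] ![1, 2, 0])
    {e : Fin 3 → ℝ} (he : IsPrimIntVec e) (hedge : IsEdgeDir Δ ![-1, 0, -1] e)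
    (hreach : ![-1, 0, -1] + e ∈ Δ) (he0 : e 0 ≠ 0) : e = ![1, 2, 0] := by
  refine hedge.eq_of_frame hΔ h0 (f₁ := ![0, -1, 0]) (f₂ := ![0, -1, 1]) (f₃ := ![1, 2, 0])
    (c₁ := 2 * e 0 - e 1 - e 2) (c₂ := e 2) (by ext i; fin_cases i <;> norm_num)
    (by simpa using hp₁) (by simpa using hp₃) (by simpa using hT)
    (by convert hA using 1; norm_num) (by convert hB using 1; norm_num)
    (by convert notMem_interior_vec3 huniq 0 1 (-1) (by simp) using 2; norm_num)
    (by convert notMem_interior_vec3 huniq 0 1 0 (by simp) using 2; norm_num)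
    he hreach hT₂ (by simpa using isPrimIntVec_vec3 1 2 0 (by simp))
    (hedge.one_le_apply he (fun x hx => by simpa using hhalf x hx) he0) ?_
  ext i; fin_cases i <;> simp; ring

theorem eq_of_isEdgeDir_of_smallFacet₃ (hΔ : Convex ℝ Δ) (h0 : 0 ∈ interior Δ)
    (huniq : ∀ w, IsLatticePt w → w ∈ interior Δ → w = 0) (hhalf : ∀ x ∈ Δ, -1 ≤ x 0)
    (hp₁ : ![-1, -1, -1] ∈ Δ) (hp₂ : ![-1, 0, -1] ∈ Δ) (hA : ![0, -1, -1] ∈ Δ)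
    (hT : ![0, 2, -1] ∈ Δ) (hB : ![0, -1, 2] ∈ Δ) (hT₃ : IsEdgeDir Δ ![-1, -1, 0] ![1, 0, 2])
    {e : Fin 3 → ℝ} (he : IsPrimIntVec e) (hedge : IsEdgeDir Δ ![-1, -1, 0] e)
    (hreach : ![-1, -1, 0] + e ∈ Δ) (he0 : e 0 ≠ 0) : e = ![1, 0, 2] := by
  refine hedge.eq_of_frame hΔ h0 (f₁ := ![0, 0, -1]) (f₂ := ![0, 1, -1]) (f₃ := ![1, 0, 2])
    (c₁ := 2 * e 0 - e 1 - e 2) (c₂ := e 1) (by ext i; fin_cases i <;> norm_num)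
    (by simpa using hp₁) (by simpa using hp₂) (by simpa using hB)
    (by convert hA using 1; norm_num) (by convert hT using 1; norm_num)
    (by convert notMem_interior_vec3 huniq 0 (-1) 1 (by simp) using 2; norm_num)
    (by convert notMem_interior_vec3 huniq 0 0 1 (by simp) using 2; norm_num)
    he hreach hT₃ (by simpa using isPrimIntVec_vec3 1 0 2 (by simp))
    (hedge.one_le_apply he (fun x hx => by simpa using hhalf x hx) he0) ?_
  ext i; fin_cases i <;> simp; ring

end SmallFacet

/-- if a 3-dimensional monotone polytope has a small facet
`F = Δ ∩ {x₀ = -1}` with vertices `(-1,-1,-1)`, `(-1,0,-1)`, `(-1,-1,0)`, then the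
primitive edge vector transverse to `F` at `(-1,0,-1)` is `(1,2,0)` and at
`(-1,-1,0)` it is `(1,0,2)`; hence `Δ` contains `(0,-1,-1)`, `(0,2,-1)`, `(0,-1,2)`. -/
theorem small_facet_edges
    (V : Finset (Fin 3 → ℝ)) (hVlat : ∀ v ∈ V, IsLatticePt v)
    (Δ : Set (Fin 3 → ℝ)) (hΔ : Δ = convexHull ℝ (V : Set (Fin 3 → ℝ)))
    (h0 : (0 : Fin 3 → ℝ) ∈ interior Δ)
    (huniq : ∀ w, IsLatticePt w → w ∈ interior Δ → w = 0)
    (hfano : ∀ v, IsVertex Δ v → VertexFanoSmoothAt Δ 0 v)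
    -- the small facet and its vertices
    (hv1 : IsVertex Δ ![-1, -1, -1]) (hv2 : IsVertex Δ ![-1, 0, -1])
    (hv3 : IsVertex Δ ![-1, -1, 0])
    (hhalf : ∀ x ∈ Δ, -1 ≤ x 0)
    (hF : Δ ∩ {x | x 0 = -1} =
      convexHull ℝ {![-1, -1, -1], ![-1, 0, -1], ![-1, -1, 0]}) :
    (∀ e : Fin 3 → ℝ, IsPrimIntVec e → IsEdgeDir Δ ![-1, 0, -1] e → e 0 ≠ 0 →
      e = ![1, 2, 0]) ∧
    (∀ e : Fin 3 → ℝ, IsPrimIntVec e → IsEdgeDir Δ ![-1, -1, 0] e → e 0 ≠ 0 →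
      e = ![1, 0, 2]) ∧
    ![(0 : ℝ), -1, -1] ∈ Δ ∧ ![(0 : ℝ), 2, -1] ∈ Δ ∧ ![(0 : ℝ), -1, 2] ∈ Δ := by
  have hconv : Convex ℝ Δ := hΔ ▸ convex_convexHull ℝ _
  have hreach {v e : Fin 3 → ℝ} (hv : IsLatticePt v) (he : IsPrimIntVec e)
      (hedge : IsEdgeDir Δ v e) : v + e ∈ Δ := by
    subst hΔ; exact hedge.add_mem_convexHull (fun w hw => hVlat w hw) hv he
  obtain ⟨hT₁, hT₂, hT₃⟩ := isEdgeDir_transverse_of_smallFacet hconv hhalf hF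
    (hfano _ hv1) (hfano _ hv2) (hfano _ hv3)
  have hlat₂ : IsLatticePt ![-1, 0, -1] := by simpa using isLatticePt_vec3 (-1) 0 (-1)
  have hlat₃ : IsLatticePt ![-1, -1, 0] := by simpa using isLatticePt_vec3 (-1) (-1) 0
  have hA : ![(0 : ℝ), -1, -1] ∈ Δ := by
    convert hreach (by simpa using isLatticePt_vec3 (-1) (-1) (-1))
      (by simpa using isPrimIntVec_vec3 1 0 0 (by simp)) hT₁ using 1
    norm_num
  have hT : ![(0 : ℝ), 2, -1] ∈ Δ := by
    convert hreach hlat₂ (by simpa using isPrimIntVec_vec3 1 2 0 (by simp)) hT₂ using 1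
    norm_num
  have hB : ![(0 : ℝ), -1, 2] ∈ Δ := by
    convert hreach hlat₃ (by simpa using isPrimIntVec_vec3 1 0 2 (by simp)) hT₃ using 1
    norm_num
  refine ⟨fun e he hedge he0 => ?_, fun e he hedge he0 => ?_, hA, hT, hB⟩
  · exact eq_of_isEdgeDir_of_smallFacet₂ hconv h0 huniq hhalf hv1.1 hv3.1 hA hT hB hT₂ he hedge
      (hreach hlat₂ he hedge) he0
  · exact eq_of_isEdgeDir_of_smallFacet₃ hconv h0 huniq hhalf hv1.1 hv2.1 hA hT hB hT₃ he hedge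
      (hreach hlat₃ he hedge) he0
end

section
/- Let Δ ⊂ ℝⁿ be a monotone polytope with interior lattice point 0, let f be a face of Δ with f = ∩_{i=1}^{d}{x ∈ Δ : xᵢ = −1} in suitable coordinates, and suppose λ ∈ 𝒮(Δ) satisfies −λ ∈ Star*(f) and λ ∉ Star(f). Then for every point u ∈ C(f, 0) = {r·0 + (1−r)y : r ∈ (0,1), y ∈ relint f}, u is displaceable by a probe in direction λ: writing −λ ∈ relint F ∖ star(f) for some facet F ⊇ f, the probe from the point w = C(f,−λ)-point corresponding to u in direction λ passes through u at less than half its affine length. -/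
open Finset

/-- The open cone `C(f, x)` from `x` over the relative interior of the face `f`. -/
def coneSet {n : ℕ} (f : Set (Fin n → ℝ)) (x : Fin n → ℝ) : Set (Fin n → ℝ) :=
  {p | ∃ r ∈ Set.Ioo (0 : ℝ) 1, ∃ y ∈ intrinsicInterior ℝ f, p = r • x + (1 - r) • y}

/-! Write `u = (1 - r) • y` with `y ∈ relint f` and `w = r • (-λ) + (1 - r) • y`, so that
`u = w + r • λ` and the probe reaches `w + 2r • λ = r • λ + (1 - r) • y`. A facet inequality is
tight at `y` only for facets containing `f`; for those, `λ ∉ Star(f)` makes it strict at `λ`, and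
`-λ ∉ star(f)` makes all but the one of `F ∋ -λ` strict at `-λ`. Taking convex combinations,
`w ∈ relint F` and `w + 2r • λ ∈ int Δ`, so the probe extends past parameter `2r`. -/

open Set Filter Topology

theorem mem_intrinsicInterior_iff_mem_nhdsWithin {𝕜 V P : Type*} [Ring 𝕜] [AddCommGroup V]
    [Module 𝕜 V] [TopologicalSpace P] [AddTorsor V P] {s : Set P} {x : P} :
    x ∈ intrinsicInterior 𝕜 s ↔ x ∈ affineSpan 𝕜 s ∧ s ∈ 𝓝[(affineSpan 𝕜 s : Set P)] x := by
  simp only [intrinsicInterior, mem_image, mem_interior_iff_mem_nhds]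
  constructor
  · rintro ⟨y, hy, rfl⟩
    exact ⟨y.2, preimage_coe_mem_nhds_subtype.1 hy⟩
  · rintro ⟨hx, hs⟩
    exact ⟨⟨x, hx⟩, preimage_coe_mem_nhds_subtype.2 hs, rfl⟩

theorem AffineMap.apply_eq_of_mem_affineSpan {k V₁ P₁ V₂ P₂ : Type*} [Ring k] [AddCommGroup V₁]
    [Module k V₁] [AddTorsor V₁ P₁] [AddCommGroup V₂] [Module k V₂] [AddTorsor V₂ P₂]
    (g : P₁ →ᵃ[k] P₂) {s : Set P₁} {c : P₂} (hs : ∀ y ∈ s, g y = c) {x : P₁}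
    (hx : x ∈ affineSpan k s) : g x = c := by
  have hle : affineSpan k s ≤ (affineSpan k {c}).comap g :=
    affineSpan_le.2 fun y hy => by simp [hs y hy]
  simpa using hle hx

/-- If `φ x = c`, pushing `x` slightly away from `z` stays in `s` (as `x` is relatively interior)
but makes `φ` exceed `c`. -/
theorem LinearMap.lt_of_mem_intrinsicInterior {E : Type*} [AddCommGroup E] [Module ℝ E]
    [TopologicalSpace E] [ContinuousAdd E] [ContinuousSMul ℝ E] (φ : E →ₗ[ℝ] ℝ) {s : Set E}
    {c : ℝ} (hle : ∀ y ∈ s, φ y ≤ c) {x z : E} (hx : x ∈ intrinsicInterior ℝ s) (hz : z ∈ s)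
    (hzc : φ z < c) : φ x < c := by
  obtain ⟨hxA, hsx⟩ := mem_intrinsicInterior_iff_mem_nhdsWithin.1 hx
  have hpath : Tendsto (fun δ : ℝ => δ • (x - z) + x) (𝓝 0) (𝓝[(affineSpan ℝ s : Set E)] x) := by
    refine tendsto_nhdsWithin_iff.2 ⟨?_, Eventually.of_forall fun δ => ?_⟩
    · have hcont : Continuous fun δ : ℝ => δ • (x - z) + x := by fun_prop
      simpa using hcont.tendsto 0
    · exact AffineSubspace.smul_vsub_vadd_mem _ δ hxA (subset_affineSpan ℝ s hz) hxA
  obtain ⟨δ, hδ, hδs⟩ := (hpath.eventually hsx).exists_gt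
  have hval : φ (δ • (x - z) + x) = φ x + δ * (φ x - φ z) := by
    simp only [map_add, map_smul, map_sub, smul_eq_mul]; ring
  have hpushed := hle _ hδs
  nlinarith [hle x (intrinsicInterior_subset hx)]

theorem LinearMap.apply_combo_lt {E : Type*} [AddCommGroup E] [Module ℝ E] (φ : E →ₗ[ℝ] ℝ)
    {a b : E} {r c : ℝ} (hr : r ∈ Set.Ioo 0 1) (ha : φ a ≤ c) (hb : φ b ≤ c)
    (h : φ a < c ∨ φ b < c) : φ (r • a + (1 - r) • b) < c := by
  simp only [map_add, map_smul, smul_eq_mul]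
  obtain ⟨hr0, hr1⟩ := hr
  rcases h with h | h <;> nlinarith

theorem lt_sSup_of_add_smul_mem_interior {E : Type*} [NormedAddCommGroup E] [NormedSpace ℝ E]
    {Δ : Set E} (hΔ : Bornology.IsBounded Δ) {w v : E} (hv : v ≠ 0) {t : ℝ} (ht : 0 ≤ t)
    (hmem : w + t • v ∈ interior Δ) : t < sSup {s : ℝ | 0 ≤ s ∧ w + s • v ∈ Δ} := by
  have hcont : Continuous fun s : ℝ => w + s • v := by fun_prop
  obtain ⟨s, hts, hs⟩ :=
    ((hcont.tendsto t).eventually (isOpen_interior.mem_nhds hmem)).exists_gt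
  obtain ⟨R, hR⟩ := isBounded_iff_forall_norm_le.1 hΔ
  have hbdd : BddAbove {s : ℝ | 0 ≤ s ∧ w + s • v ∈ Δ} := by
    refine ⟨(R + ‖w‖) / ‖v‖, fun s ⟨hs0, hsΔ⟩ => (le_div_iff₀ (norm_pos_iff.2 hv)).2 ?_⟩
    calc s * ‖v‖ = ‖(w + s • v) - w‖ := by simp [norm_smul, abs_of_nonneg hs0]
      _ ≤ ‖w + s • v‖ + ‖w‖ := norm_sub_le _ _
      _ ≤ R + ‖w‖ := by linarith [hR _ hsΔ]
  exact hts.trans_le (le_csSup hbdd ⟨by linarith, interior_subset hs⟩)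

section Polyhedron

variable {ι E : Type*} [AddCommGroup E] [Module ℝ E] [TopologicalSpace E]

def polyhedron (φ : ι → E →L[ℝ] ℝ) : Set E := {x | ∀ i, φ i x ≤ 1}

def facet (φ : ι → E →L[ℝ] ℝ) (i : ι) : Set E := {x ∈ polyhedron φ | φ i x = 1}

theorem mem_interior_polyhedron [Finite ι] {φ : ι → E →L[ℝ] ℝ} {x : E} (hx : ∀ i, φ i x < 1) :
    x ∈ interior (polyhedron φ) := by
  refine interior_maximal (t := {x | ∀ i, φ i x < 1}) (fun y hy i => (hy i).le) ?_ hx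
  simp only [Set.ofPred_forall]
  exact isOpen_iInter_of_finite fun i => isOpen_lt (φ i).continuous continuous_const

theorem mem_intrinsicInterior_facet [Finite ι] {φ : ι → E →L[ℝ] ℝ} {i₀ : ι} {w : E}
    (hw₀ : φ i₀ w = 1) (hw : ∀ i ≠ i₀, φ i w < 1) : w ∈ intrinsicInterior ℝ (facet φ i₀) := by
  have hwF : w ∈ facet φ i₀ := ⟨fun i => by
    rcases eq_or_ne i i₀ with rfl | hi
    · exact hw₀.le
    · exact (hw i hi).le, hw₀⟩
  have hV : IsOpen {x | ∀ i ≠ i₀, φ i x < 1} := by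
    simp only [Set.ofPred_forall]
    exact isOpen_iInter_of_finite fun i => isOpen_iInter_of_finite fun _ =>
      isOpen_lt (φ i).continuous continuous_const
  have hspan : ∀ x ∈ affineSpan ℝ (facet φ i₀), φ i₀ x = 1 := fun x hx =>
    (φ i₀ : E →ₗ[ℝ] ℝ).toAffineMap.apply_eq_of_mem_affineSpan (fun y hy => hy.2) hx
  refine mem_intrinsicInterior_iff_mem_nhdsWithin.2
    ⟨subset_affineSpan ℝ _ hwF, mem_nhdsWithin.2 ⟨_, hV, hw, ?_⟩⟩
  rintro x ⟨hxV, hxA⟩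
  refine ⟨fun i => ?_, hspan x hxA⟩
  rcases eq_or_ne i i₀ with rfl | hi
  · exact (hspan x hxA).le
  · exact (hxV i hi).le

theorem lt_one_of_notMem_facet {φ : ι → E →L[ℝ] ℝ} {x : E} {i : ι} (hx : x ∈ polyhedron φ)
    (h : x ∉ facet φ i) : φ i x < 1 :=
  (hx i).lt_of_ne fun he => h ⟨hx, he⟩

theorem biInter_facet_subset_polyhedron {φ : ι → E →L[ℝ] ℝ} {I : Set ι} (hI : I.Nonempty) :
    ⋂ j ∈ I, facet φ j ⊆ polyhedron φ :=
  let ⟨_, hj⟩ := hI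
  (biInter_subset_of_mem hj).trans (sep_subset _ _)

theorem lt_one_of_mem_intrinsicInterior_face [ContinuousAdd E] [ContinuousSMul ℝ E]
    {φ : ι → E →L[ℝ] ℝ} {I : Set ι} {x : E} {i : ι} (hI : I.Nonempty)
    (hx : x ∈ intrinsicInterior ℝ (⋂ j ∈ I, facet φ j)) (hi : ¬⋂ j ∈ I, facet φ j ⊆ facet φ i) :
    φ i x < 1 := by
  obtain ⟨z, hz, hzi⟩ := Set.not_subset.1 hi
  have hface := biInter_facet_subset_polyhedron (φ := φ) hI
  exact (φ i : E →ₗ[ℝ] ℝ).lt_of_mem_intrinsicInterior (fun y hy => hface hy i) hx hz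
    (lt_one_of_notMem_facet (hface hz) hzi)

theorem combo_lt_one_of_mem_intrinsicInterior_face [ContinuousAdd E] [ContinuousSMul ℝ E]
    {φ : ι → E →L[ℝ] ℝ} {I : Set ι} {a y : E} {r : ℝ} {i : ι} (hI : I.Nonempty)
    (hy : y ∈ intrinsicInterior ℝ (⋂ j ∈ I, facet φ j)) (ha : a ∈ polyhedron φ)
    (hr : r ∈ Set.Ioo 0 1) (hai : ⋂ j ∈ I, facet φ j ⊆ facet φ i → φ i a < 1) :
    φ i (r • a + (1 - r) • y) < 1 := by
  have hyP := biInter_facet_subset_polyhedron hI (intrinsicInterior_subset hy)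
  refine (φ i : E →ₗ[ℝ] ℝ).apply_combo_lt hr (ha i) (hyP i) ?_
  by_cases hi : ⋂ j ∈ I, facet φ j ⊆ facet φ i
  · exact .inl (hai hi)
  · exact .inr (lt_one_of_mem_intrinsicInterior_face hI hy hi)

end Polyhedron

section Star

variable {n N : ℕ} {F : Fin N → Set (Fin n → ℝ)} {I : Set (Fin N)} {x : Fin n → ℝ} {i : Fin N}

theorem notMem_of_notMem_starU (hx : x ∉ StarU F I) (hi : i ∈ StarIdx F I) : x ∉ F i :=
  fun h => hx (mem_iUnion₂.2 ⟨i, hi, h⟩)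

theorem notMem_of_notMem_starLowerU {i₀ : Fin N} (hx : x ∉ starLowerU F I) (hx₀ : x ∈ F i₀)
    (hi₀ : i₀ ∈ StarIdx F I) (hi : i ∈ StarIdx F I) (hne : i ≠ i₀) : x ∉ F i := fun h =>
  hx (by simp only [starLowerU, mem_iUnion]; exact ⟨i, hi, i₀, hi₀, hne, h, hx₀⟩)

end Star

def dotzCLM {n : ℕ} (a : Fin n → ℤ) : (Fin n → ℝ) →L[ℝ] ℝ where
  toFun := dotz a
  map_add' x y := by simp [dotz, mul_add, sum_add_distrib]
  map_smul' c x := by simp [dotz, mul_sum, mul_left_comm]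
  cont := continuous_finsetSum _ fun i _ => continuous_const.mul (continuous_apply i)

theorem abs_sum_mul_eq_one_of_dotz_neg {n : ℕ} {a b : Fin n → ℤ}
    (h : dotz a (fun j => -(b j : ℝ)) = 1) : |∑ j, b j * a j| = 1 := by
  have hsum : -((∑ j, b j * a j : ℤ) : ℝ) = 1 := by simpa [dotz, mul_comm] using h
  rw [show ∑ j, b j * a j = -1 by exact_mod_cast neg_eq_iff_eq_neg.1 hsum]
  rfl

theorem cone_displaceable_by_probes_general {n N : ℕ}
    (η : Fin N → Fin n → ℤ)
    (Δ : Set (Fin n → ℝ)) (hΔ : Δ = {x | ∀ i, dotz (η i) x ≤ 1})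
    (hcpt : IsCompact Δ)
    (F : Fin N → Set (Fin n → ℝ)) (hF : ∀ i, F i = {x ∈ Δ | dotz (η i) x = 1})
    -- the face `f = ⋂ i ∈ I, F i`
    (I : Set (Fin N)) (hIne : I.Nonempty)
    -- `λ ∈ 𝒮(Δ)` with `-λ ∈ Star*(f)` and `λ ∉ Star(f)`
    (l : Fin n → ℤ)
    (hlΔ : (fun j => (l j : ℝ)) ∈ Δ) (hlΔ' : (fun j => -(l j : ℝ)) ∈ Δ)
    (hlstar : (fun j => -(l j : ℝ)) ∈ StarU F I \ starLowerU F I)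
    (hlnot : (fun j => (l j : ℝ)) ∉ StarU F I) :
    ∀ u ∈ coneSet (⋂ i ∈ I, F i) 0,
      ∃ i₀ ∈ StarIdx F I,
        ∃ w ∈ coneSet (⋂ i ∈ I, F i) (fun j => -(l j : ℝ)),
          w ∈ intrinsicInterior ℝ (F i₀) ∧
          |∑ j, l j * η i₀ j| = 1 ∧
          ∃ t : ℝ, 0 < t ∧ u = w + t • (fun j => (l j : ℝ)) ∧
            2 * t < sSup {s : ℝ | 0 ≤ s ∧ w + s • (fun j => (l j : ℝ)) ∈ Δ} := by
  rintro u ⟨r, hr, y, hy, rfl⟩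
  set φ : Fin N → (Fin n → ℝ) →L[ℝ] ℝ := fun i => dotzCLM (η i)
  obtain rfl : Δ = polyhedron φ := hΔ
  obtain rfl : F = facet φ := funext hF
  obtain ⟨i₀, hi₀, hlF⟩ := mem_iUnion₂.1 hlstar.1
  have hw₀ : φ i₀ (r • (fun j => -(l j : ℝ)) + (1 - r) • y) = 1 := by
    simp only [map_add, map_smul, smul_eq_mul, hlF.2, (hi₀ (intrinsicInterior_subset hy)).2]
    ring
  have hw : ∀ i ≠ i₀, φ i (r • (fun j => -(l j : ℝ)) + (1 - r) • y) < 1 := fun i hne =>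
    combo_lt_one_of_mem_intrinsicInterior_face hIne hy hlΔ' hr fun hi =>
      lt_one_of_notMem_facet hlΔ' (notMem_of_notMem_starLowerU hlstar.2 hlF hi₀ hi hne)
  have hprobe : ∀ i, φ i (r • (fun j => (l j : ℝ)) + (1 - r) • y) < 1 := fun i =>
    combo_lt_one_of_mem_intrinsicInterior_face hIne hy hlΔ hr fun hi =>
      lt_one_of_notMem_facet hlΔ (notMem_of_notMem_starU hlnot hi)
  have hl : (fun j => (l j : ℝ)) ≠ 0 := fun h => hlnot <| by
    convert hlstar.1 using 1
    ext j
    simp [show l j = 0 by simpa using congrFun h j]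
  refine ⟨i₀, hi₀, _, ⟨r, hr, y, hy, rfl⟩, mem_intrinsicInterior_facet hw₀ hw,
    abs_sum_mul_eq_one_of_dotz_neg hlF.2, r, hr.1, ?_, ?_⟩
  · ext j
    simp
  · refine lt_sSup_of_add_smul_mem_interior hcpt.isBounded hl (by linarith [hr.1]) ?_
    convert mem_interior_polyhedron hprobe using 1
    ext j
    simp
    ring

/-- if `λ ∈ 𝒮(Δ)` satisfies `-λ ∈ Star*(f)` and `λ ∉ Star(f)`, then every
point of the cone `C(f,0)` is displaceable by a probe in direction `λ` starting at a
point of `C(f,-λ)` in the relative interior of a facet containing `f`. -/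
theorem cone_displaceable_by_probes {n N : ℕ}
    (η : Fin N → Fin n → ℤ) (hprim : ∀ i, IsPrimitiveZ (η i))
    (Δ : Set (Fin n → ℝ)) (hΔ : Δ = {x | ∀ i, dotz (η i) x ≤ 1})
    (hcpt : IsCompact Δ) (h0 : (0 : Fin n → ℝ) ∈ interior Δ)
    (huniq : ∀ w, IsLatticePt w → w ∈ interior Δ → w = 0)
    (hvlat : ∀ v, IsVertex Δ v → IsLatticePt v)
    (hfano : ∀ v, IsVertex Δ v → VertexFanoSmoothAt Δ 0 v)
    (F : Fin N → Set (Fin n → ℝ)) (hF : ∀ i, F i = {x ∈ Δ | dotz (η i) x = 1})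
    -- the face `f = ⋂ i ∈ I, F i`
    (I : Set (Fin N)) (hIne : I.Nonempty) (hfne : (⋂ i ∈ I, F i).Nonempty)
    -- `λ ∈ 𝒮(Δ)` with `-λ ∈ Star*(f)` and `λ ∉ Star(f)`
    (l : Fin n → ℤ) (hl0 : l ≠ 0)
    (hlΔ : (fun j => (l j : ℝ)) ∈ Δ) (hlΔ' : (fun j => -(l j : ℝ)) ∈ Δ)
    (hlstar : (fun j => -(l j : ℝ)) ∈ StarU F I \ starLowerU F I)
    (hlnot : (fun j => (l j : ℝ)) ∉ StarU F I) :
    ∀ u ∈ coneSet (⋂ i ∈ I, F i) 0,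
      ∃ i₀ ∈ StarIdx F I,
        ∃ w ∈ coneSet (⋂ i ∈ I, F i) (fun j => -(l j : ℝ)),
          w ∈ intrinsicInterior ℝ (F i₀) ∧
          |∑ j, l j * η i₀ j| = 1 ∧
          ∃ t : ℝ, 0 < t ∧ u = w + t • (fun j => (l j : ℝ)) ∧
            2 * t < sSup {s : ℝ | 0 ≤ s ∧ w + s • (fun j => (l j : ℝ)) ∈ Δ} :=
  cone_displaceable_by_probes_general η Δ hΔ hcpt F hF I hIne l hlΔ hlΔ' hlstar hlnot
end
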